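/- arXiv:2212.14061 — 3 statements merged into one kernel-verified Lean document; each statement's English description precedes it below -/
import Mathlib

section
/- Let α ∈ ℝ, k ≥ 1 an integer, T > 0, and let b : [0,L]×[0,T] → ℝ be continuous with b(x,t) ≤ 0 for all (x,t). Let v¹, …, v^k be classical solutions on [0,T] of the linearized equation ∂_t v = ∂_x² v − g·v + α·v + b·v with Dirichlet boundary conditions. Then for every t ∈ [0,T] the Gram determinant satisfies det[(⟨v^a(·,t), v^{a'}(·,t)⟩)_{1≤a,a'≤k}] ≤ exp(2t·Σ_{j=1}^k (α − λ_j)) · det[(⟨v^a(·,0), v^{a'}(·,0)⟩)_{1≤a,a'≤k}]. (This is the deterministic content of the paper's Theorem 2.1: the k-th finite-time Lyapunov exponent along the attractor is at most Σ_{j=1}^k (α − λ_j).) -/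
open MeasureTheory

/-- The `L²(0,L)` inner product `⟨f,h⟩ = ∫₀^L f·h dx`. -/
noncomputable def ip (L : ℝ) (f h : ℝ → ℝ) : ℝ := ∫ x in (0:ℝ)..L, f x * h x

open intervalIntegral Set

section IpBasics
variable {L : ℝ} (hL : 0 < L)

lemma ip_comm (f h : ℝ → ℝ) : ip L f h = ip L h f := by
  unfold ip; congr 1; ext x; ring

lemma ip_self_nonneg (f : ℝ → ℝ) (hL : 0 ≤ L) : 0 ≤ ip L f f :=
  intervalIntegral.integral_nonneg hL (fun u _ => mul_self_nonneg _)

lemma contOn_mul_integrable {f h : ℝ → ℝ} (hL : 0 ≤ L)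
    (hf : ContinuousOn f (Icc 0 L)) (hh : ContinuousOn h (Icc 0 L)) :
    IntervalIntegrable (fun x => f x * h x) volume 0 L :=
  ContinuousOn.intervalIntegrable (by rw [Set.uIcc_of_le hL]; exact hf.mul hh)

lemma ip_sum_left {ι : Type*} (s : Finset ι) (c : ι → ℝ) (w : ι → ℝ → ℝ) (f : ℝ → ℝ)
    (hw : ∀ a ∈ s, IntervalIntegrable (fun x => w a x * f x) volume 0 L) :
    ip L (fun x => ∑ a ∈ s, c a * w a x) f = ∑ a ∈ s, c a * ip L (w a) f := by
  unfold ip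
  rw [show (fun x => (∑ a ∈ s, c a * w a x) * f x)
      = (fun x => ∑ a ∈ s, c a * (w a x * f x)) by ext x; rw [Finset.sum_mul]; exact Finset.sum_congr rfl fun a _ => by ring]
  rw [intervalIntegral.integral_finset_sum (fun a ha => (hw a ha).const_mul (c a))]
  exact Finset.sum_congr rfl fun a _ => intervalIntegral.integral_const_mul _ _

lemma ip_sum_right {ι : Type*} (s : Finset ι) (c : ι → ℝ) (w : ι → ℝ → ℝ) (f : ℝ → ℝ)
    (hw : ∀ a ∈ s, IntervalIntegrable (fun x => w a x * f x) volume 0 L) :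
    ip L f (fun x => ∑ a ∈ s, c a * w a x) = ∑ a ∈ s, c a * ip L f (w a) := by
  rw [ip_comm, ip_sum_left s c w f hw]
  exact Finset.sum_congr rfl fun a _ => by rw [ip_comm]

lemma ip_sub_left (f₁ f₂ h : ℝ → ℝ)
    (h1 : IntervalIntegrable (fun x => f₁ x * h x) volume 0 L)
    (h2 : IntervalIntegrable (fun x => f₂ x * h x) volume 0 L) :
    ip L (fun x => f₁ x - f₂ x) h = ip L f₁ h - ip L f₂ h := by
  unfold ip
  rw [show (fun x => (f₁ x - f₂ x) * h x) = (fun x => f₁ x * h x - f₂ x * h x) by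
    ext x; ring]
  exact intervalIntegral.integral_sub h1 h2

lemma ip_add_left (f₁ f₂ h : ℝ → ℝ)
    (h1 : IntervalIntegrable (fun x => f₁ x * h x) volume 0 L)
    (h2 : IntervalIntegrable (fun x => f₂ x * h x) volume 0 L) :
    ip L (fun x => f₁ x + f₂ x) h = ip L f₁ h + ip L f₂ h := by
  unfold ip
  rw [show (fun x => (f₁ x + f₂ x) * h x) = (fun x => f₁ x * h x + f₂ x * h x) by
    ext x; ring]
  exact intervalIntegral.integral_add h1 h2

lemma ip_const_mul_left (c : ℝ) (f h : ℝ → ℝ) :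
    ip L (fun x => c * f x) h = c * ip L f h := by
  unfold ip
  rw [show (fun x => (c * f x) * h x) = (fun x => c * (f x * h x)) by ext x; ring]
  exact intervalIntegral.integral_const_mul _ _

/-- Cauchy–Schwarz for `ip`. -/
lemma ip_sq_le (f h : ℝ → ℝ) (hL : 0 ≤ L)
    (hf : ContinuousOn f (Icc 0 L)) (hh : ContinuousOn h (Icc 0 L)) :
    (ip L f h) ^ 2 ≤ ip L f f * ip L h h := by
  set A := ip L f f with hA
  set B := ip L f h with hB
  set C := ip L h h with hC
  have key : ∀ x : ℝ, 0 ≤ x ^ 2 * A + 2 * x * B + C := by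
    intro x
    have h0 : 0 ≤ ip L (fun y => x * f y + h y) (fun y => x * f y + h y) :=
      ip_self_nonneg _ hL
    have hexp : ip L (fun y => x * f y + h y) (fun y => x * f y + h y)
        = x ^ 2 * A + 2 * x * B + C := by
      have hff := contOn_mul_integrable hL hf hf
      have hfh := contOn_mul_integrable hL hf hh
      have hhh := contOn_mul_integrable hL hh hh
      unfold ip
      rw [show (fun y => (x * f y + h y) * (x * f y + h y))
          = (fun y => (x^2 * (f y * f y) + (2*x) * (f y * h y)) + h y * h y) by
        ext y; ring]
      rw [intervalIntegral.integral_add (((hff.const_mul _).add (hfh.const_mul _))) hhh,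
        intervalIntegral.integral_add (hff.const_mul _) (hfh.const_mul _),
        intervalIntegral.integral_const_mul, intervalIntegral.integral_const_mul]
      simp only [hA, hB, hC, ip]
      try ring
    linarith [hexp ▸ h0]
  have hAnn : 0 ≤ A := ip_self_nonneg f hL
  have hCnn : 0 ≤ C := ip_self_nonneg h hL
  rcases eq_or_lt_of_le hAnn with hA0 | hApos
  · -- A = 0 : show B = 0
    have hB0 : B = 0 := by
      by_contra hBne
      have h2B : (2 * B) ≠ 0 := by
        intro hz; exact hBne (by linarith)
      have hth := key (-(C + 1) / (2 * B))
      rw [← hA0] at hth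
      have hx : 2 * (-(C + 1) / (2 * B)) * B = -(C+1) := by
        field_simp
      rw [mul_zero, zero_add, hx] at hth
      linarith
    rw [hB0, ← hA0]
    nlinarith
  · have := key (-B / A)
    have hAne : A ≠ 0 := ne_of_gt hApos
    have h2 : (-B / A) ^ 2 * A + 2 * (-B / A) * B + C = C - B ^ 2 / A := by
      field_simp; ring
    rw [h2] at this
    have : B ^ 2 / A ≤ C := by linarith
    calc B ^ 2 = (B ^ 2 / A) * A := by field_simp
    _ ≤ C * A := by exact mul_le_mul_of_nonneg_right this (le_of_lt hApos)
    _ = A * C := by ring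

end IpBasics

section C2
lemma c2_facts {f : ℝ → ℝ} (hf : ContDiff ℝ 2 f) :
    Differentiable ℝ f ∧ Differentiable ℝ (deriv f) ∧ Continuous (deriv (deriv f)) := by
  have h2 : ContDiff ℝ ((1 : ℕ) + 1) f := by exact_mod_cast hf
  rw [contDiff_succ_iff_deriv] at h2
  obtain ⟨hd, -, h1⟩ := h2
  norm_cast at h1
  rw [contDiff_one_iff_deriv] at h1
  exact ⟨hd, h1.1, h1.2⟩

/-- Integration by parts twice: move a second derivative across. -/
lemma ibp_swap {L : ℝ} (hL : 0 < L) {f h : ℝ → ℝ}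
    (hf : ContDiff ℝ 2 f) (hh : ContDiff ℝ 2 h)
    (hf0 : f 0 = 0) (hfL : f L = 0) (hh0 : h 0 = 0) (hhL : h L = 0) :
    ∫ x in (0:ℝ)..L, deriv (deriv f) x * h x = ∫ x in (0:ℝ)..L, f x * deriv (deriv h) x := by
  obtain ⟨hfd, hfd', hfc''⟩ := c2_facts hf
  obtain ⟨hhd, hhd', hhc''⟩ := c2_facts hh
  have hfc : Continuous f := hfd.continuous
  have hfc' : Continuous (deriv f) := hfd'.continuous
  have hhc : Continuous h := hhd.continuous
  have hhc' : Continuous (deriv h) := hhd'.continuous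
  have I1 : ∫ x in (0:ℝ)..L, h x * deriv (deriv f) x
      = h L * deriv f L - h 0 * deriv f 0 - ∫ x in (0:ℝ)..L, deriv h x * deriv f x := by
    apply intervalIntegral.integral_mul_deriv_eq_deriv_mul_of_hasDerivAt
      hhc.continuousOn (hfc'.continuousOn)
      (fun x _ => (hhd x).hasDerivAt)
      (fun x _ => (hfd' x).hasDerivAt)
      (hhc'.intervalIntegrable 0 L) (hfc''.intervalIntegrable 0 L)
  have I2 : ∫ x in (0:ℝ)..L, f x * deriv (deriv h) x
      = f L * deriv h L - f 0 * deriv h 0 - ∫ x in (0:ℝ)..L, deriv f x * deriv h x := by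
    apply intervalIntegral.integral_mul_deriv_eq_deriv_mul_of_hasDerivAt
      hfc.continuousOn (hhc'.continuousOn)
      (fun x _ => (hfd x).hasDerivAt)
      (fun x _ => (hhd' x).hasDerivAt)
      (hfc'.intervalIntegrable 0 L) (hhc''.intervalIntegrable 0 L)
  have flip : ∫ x in (0:ℝ)..L, deriv (deriv f) x * h x
      = ∫ x in (0:ℝ)..L, h x * deriv (deriv f) x := by
    congr 1; ext x; ring
  have flip2 : ∫ x in (0:ℝ)..L, deriv h x * deriv f x
      = ∫ x in (0:ℝ)..L, deriv f x * deriv h x := by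
    congr 1; ext x; ring
  rw [flip, I1, I2, flip2, hh0, hhL, hf0, hfL]
  ring
end C2

section Spectral

lemma ip_neg_left {L : ℝ} (f h : ℝ → ℝ) : ip L (fun x => -(f x)) h = - ip L f h := by
  unfold ip
  rw [← intervalIntegral.integral_neg]
  congr 1; ext x; ring

lemma eig_coeff {L : ℝ} (hL : 0 < L) {g : ℝ → ℝ} (hg_cont : ContinuousOn g (Set.Icc 0 L))
    {f ej : ℝ → ℝ} {lamj : ℝ}
    (hf : ContDiff ℝ 2 f) (hf0 : f 0 = 0) (hfL : f L = 0)
    (hej : ContDiff ℝ 2 ej) (hej0 : ej 0 = 0) (hejL : ej L = 0)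
    (heig : ∀ x ∈ Set.Icc 0 L, -(deriv (deriv ej) x) + g x * ej x = lamj * ej x) :
    ip L (fun x => -(deriv (deriv f) x) + g x * f x) ej = lamj * ip L f ej := by
  obtain ⟨hfd, hfd', hfc''⟩ := c2_facts hf
  have hfc : Continuous f := hfd.continuous
  have hejc : Continuous ej := (c2_facts hej).1.continuous
  have hejc'' : Continuous (deriv (deriv ej)) := (c2_facts hej).2.2
  have int1 : IntervalIntegrable (fun x => -(deriv (deriv f) x) * ej x) volume 0 L :=
    ((hfc''.neg).mul hejc).intervalIntegrable 0 L
  have int2 : IntervalIntegrable (fun x => (g x * f x) * ej x) volume 0 L :=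
    contOn_mul_integrable hL.le (hg_cont.mul hfc.continuousOn) hejc.continuousOn
  have h1 : ip L (fun x => -(deriv (deriv f) x) + g x * f x) ej
      = (∫ x in (0:ℝ)..L, -(deriv (deriv f) x) * ej x)
        + ∫ x in (0:ℝ)..L, (g x * f x) * ej x := by
    unfold ip
    rw [show (fun x => (-(deriv (deriv f) x) + g x * f x) * ej x)
        = fun x => (-(deriv (deriv f) x) * ej x) + (g x * f x) * ej x from by
      ext x; ring]
    exact intervalIntegral.integral_add int1 int2
  have h2 : ∫ x in (0:ℝ)..L, -(deriv (deriv f) x) * ej x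
      = ∫ x in (0:ℝ)..L, -(f x * deriv (deriv ej) x) := by
    rw [show (fun x => -(deriv (deriv f) x) * ej x)
        = (fun x => -(deriv (deriv f) x * ej x)) from by ext x; ring,
      intervalIntegral.integral_neg, intervalIntegral.integral_neg,
      ibp_swap hL hf hej hf0 hfL hej0 hejL]
  have h3 : (∫ x in (0:ℝ)..L, -(f x * deriv (deriv ej) x))
        + ∫ x in (0:ℝ)..L, (g x * f x) * ej x
      = ∫ x in (0:ℝ)..L, f x * (-(deriv (deriv ej) x) + g x * ej x) := by
    rw [← intervalIntegral.integral_add (f := fun x => -(f x * deriv (deriv ej) x)) ((hfc.mul hejc'').neg.intervalIntegrable 0 L) int2]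
    congr 1; ext x; ring
  have h4 : ∫ x in (0:ℝ)..L, f x * (-(deriv (deriv ej) x) + g x * ej x)
      = ∫ x in (0:ℝ)..L, f x * (lamj * ej x) := by
    apply intervalIntegral.integral_congr
    intro x hx
    rw [Set.uIcc_of_le hL.le] at hx
    simp only
    rw [heig x hx]
  rw [h1, h2, h3, h4]
  rw [show (fun x => f x * (lamj * ej x)) = fun x => lamj * (f x * ej x) from by ext x; ring]
  rw [intervalIntegral.integral_const_mul]
  rfl

end Spectral

open Filter Topology in
lemma spectral_bound {L : ℝ} (hL : 0 < L) {g : ℝ → ℝ}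
    (hg_cont : ContinuousOn g (Set.Icc 0 L))
    {e : ℕ → ℝ → ℝ} {lam : ℕ → ℝ}
    (hlam_mono : StrictMono lam)
    (he_smooth : ∀ j, ContDiff ℝ 2 (e j))
    (he_bd0 : ∀ j, e j 0 = 0) (he_bdL : ∀ j, e j L = 0)
    (he_eig : ∀ j, ∀ x ∈ Set.Icc 0 L,
      -(deriv (deriv (e j)) x) + g x * e j x = lam j * e j x)
    (he_on : ∀ i j, ip L (e i) (e j) = if i = j then 1 else 0)
    (he_parseval : ∀ f : ℝ → ℝ, Continuous f → f 0 = 0 → f L = 0 →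
      ip L f f = ∑' j, (ip L f (e j)) ^ 2)
    (α : ℝ) {k : ℕ} {β : ℝ → ℝ} (hβ_cont : ContinuousOn β (Set.Icc 0 L))
    (hβ_nonpos : ∀ x ∈ Set.Icc 0 L, β x ≤ 0)
    (w : Fin k → ℝ → ℝ)
    (hw_smooth : ∀ a, ContDiff ℝ 2 (w a))
    (hw0 : ∀ a, w a 0 = 0) (hwL : ∀ a, w a L = 0)
    (hw_on : ∀ a a', ip L (w a) (w a') = if a = a' then 1 else 0) :
    ∑ a, ip L (fun x => deriv (deriv (w a)) x - g x * w a x + α * w a x + β x * w a x) (w a)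
      ≤ ∑ j ∈ Finset.range k, (α - lam j) := by
  classical
  have hwc : ∀ a, Continuous (w a) := fun a => (c2_facts (hw_smooth a)).1.continuous
  have hec : ∀ j, Continuous (e j) := fun j => (c2_facts (he_smooth j)).1.continuous
  set c : Fin k → ℕ → ℝ := fun a j => ip L (w a) (e j) with hc
  set Hw : Fin k → ℝ → ℝ := fun a x => -(deriv (deriv (w a)) x) + g x * w a x with hHw
  have hHwCO : ∀ a, ContinuousOn (Hw a) (Set.Icc 0 L) := fun a =>
    ((c2_facts (hw_smooth a)).2.2.neg.continuousOn.add
      (hg_cont.mul (hwc a).continuousOn))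
  have heig : ∀ a j, ip L (Hw a) (e j) = lam j * c a j := fun a j =>
    eig_coeff hL hg_cont (hw_smooth a) (hw0 a) (hwL a) (he_smooth j) (he_bd0 j) (he_bdL j)
      (he_eig j)
  set p : Fin k → ℕ → ℝ → ℝ := fun a N x => ∑ j ∈ Finset.range N, c a j * e j x with hp
  set r : Fin k → ℕ → ℝ → ℝ := fun a N x => w a x - p a N x with hr
  have hpc : ∀ a N, Continuous (p a N) := by
    intro a N
    exact continuous_finset_sum _ (fun j _ => continuous_const.mul (hec j))
  have hrc : ∀ a N, Continuous (r a N) := fun a N => (hwc a).sub (hpc a N)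
  set S : Fin k → ℕ → ℝ := fun a N => ∑ j ∈ Finset.range N, (c a j) ^ 2 with hS
  -- generic expansion against the remainder
  have expand : ∀ (F : ℝ → ℝ), ContinuousOn F (Set.Icc 0 L) → ∀ a N,
      ip L F (r a N) = ip L F (w a) - ∑ j ∈ Finset.range N, c a j * ip L F (e j) := by
    intro F hF a N
    rw [ip_comm, hr]
    simp only
    rw [ip_sub_left (w a) (p a N) F
      (contOn_mul_integrable hL.le (hwc a).continuousOn hF)
      (contOn_mul_integrable hL.le (hpc a N).continuousOn hF), hp]
    simp only
    rw [ip_sum_left (Finset.range N) (c a) e F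
      (fun j _ => contOn_mul_integrable hL.le (hec j).continuousOn hF),
      ip_comm (w a) F]
    congr 1
    exact Finset.sum_congr rfl fun j _ => by rw [ip_comm]
  -- ⟨e j, r a N⟩ = 0 for j < N
  have hrej : ∀ a N, ∀ j ∈ Finset.range N, ip L (e j) (r a N) = 0 := by
    intro a N j hj
    rw [expand (e j) (hec j).continuousOn a N, ip_comm (e j) (w a)]
    simp only [he_on j, mul_ite, mul_one, mul_zero]
    rw [Finset.sum_ite_eq (Finset.range N) j (c a), if_pos hj]
    exact sub_self _
  -- ‖r‖² = 1 − S
  have hwon1 : ∀ a, ip L (w a) (w a) = 1 := fun a => by rw [hw_on a a, if_pos rfl]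
  have hnorm_r : ∀ a N, ip L (r a N) (r a N) = 1 - S a N := by
    intro a N
    rw [expand (r a N) (hrc a N).continuousOn a N]
    have h2 : ∀ j ∈ Finset.range N, c a j * ip L (r a N) (e j) = 0 := by
      intro j hj
      rw [ip_comm, hrej a N j hj, mul_zero]
    rw [Finset.sum_congr rfl h2, Finset.sum_const_zero, sub_zero,
      ip_comm (r a N) (w a), expand (w a) (hwc a).continuousOn a N, hwon1 a]
    congr 1
    rw [hS]
    exact Finset.sum_congr rfl fun j _ => by
      show c a j * ip L (w a) (e j) = c a j ^ 2
      rw [show ip L (w a) (e j) = c a j from rfl]; ring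
  have hBessel_w : ∀ a N, S a N ≤ 1 := by
    intro a N
    have := ip_self_nonneg (r a N) hL.le
    rw [hnorm_r a N] at this
    linarith
  have hSnonneg : ∀ a N, 0 ≤ S a N := fun a N =>
    Finset.sum_nonneg fun j _ => sq_nonneg _
  -- Parseval: S a N → 1
  have hTend : ∀ a, Tendsto (fun N => S a N) atTop (𝓝 1) := by
    intro a
    have hps := he_parseval (w a) (hwc a) (hw0 a) (hwL a)
    rw [hwon1 a] at hps
    have hsum : Summable (fun j => (c a j) ^ 2) := by
      by_contra h
      rw [tsum_eq_zero_of_not_summable h] at hps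
      norm_num at hps
    have := hsum.hasSum.tendsto_sum_nat
    rw [← hps] at this
    exact this
  -- ⟨Hw a, w a⟩ is the limit of the partial sums ∑_{j<N} lam j c²
  have hHlim : ∀ a, Tendsto (fun N => ∑ j ∈ Finset.range N, lam j * (c a j) ^ 2)
      atTop (𝓝 (ip L (Hw a) (w a))) := by
    intro a
    have hkey : ∀ N, ip L (Hw a) (w a) - ∑ j ∈ Finset.range N, lam j * (c a j) ^ 2
        = ip L (Hw a) (r a N) := by
      intro N
      rw [expand (Hw a) (hHwCO a) a N]
      congr 1
      exact Finset.sum_congr rfl fun j _ => by rw [heig a j]; ring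
    have hK := ip_self_nonneg (Hw a) hL.le
    have hbd : ∀ N, ‖ip L (Hw a) (r a N)‖
        ≤ Real.sqrt (ip L (Hw a) (Hw a) * (1 - S a N)) := by
      intro N
      have hcs := ip_sq_le (Hw a) (r a N) hL.le (hHwCO a) (hrc a N).continuousOn
      rw [hnorm_r a N] at hcs
      rw [Real.norm_eq_abs, ← Real.sqrt_sq_eq_abs (ip L (Hw a) (r a N))]
      exact Real.sqrt_le_sqrt hcs
    have hto0 : Tendsto (fun N => Real.sqrt (ip L (Hw a) (Hw a) * (1 - S a N)))
        atTop (𝓝 0) := by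
      have h1 : Tendsto (fun N => ip L (Hw a) (Hw a) * (1 - S a N)) atTop (𝓝 0) := by
        have := (tendsto_const_nhds (x := (1:ℝ)) (f := atTop)).sub (hTend a)
        have h2 := (tendsto_const_nhds (x := ip L (Hw a) (Hw a)) (f := atTop)).mul this
        simpa using h2
      have := (Real.continuous_sqrt.tendsto 0).comp h1
      simpa [Function.comp_def] using this
    have hr0 : Tendsto (fun N => ip L (Hw a) (r a N)) atTop (𝓝 0) :=
      squeeze_zero_norm hbd hto0
    have : Tendsto (fun N => ip L (Hw a) (w a)
        - (ip L (Hw a) (w a) - ∑ j ∈ Finset.range N, lam j * (c a j) ^ 2))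
        atTop (𝓝 (ip L (Hw a) (w a) - 0)) := by
      apply Tendsto.sub tendsto_const_nhds
      simp only [hkey]
      exact hr0
    simpa using this
  -- Bessel against the w family: t j := ∑_a (c a j)² ≤ 1
  have hBessel_e : ∀ j, ∑ a, (c a j) ^ 2 ≤ 1 := by
    intro j
    set q : ℝ → ℝ := fun x => ∑ a, c a j * w a x with hq
    have hqc : Continuous q := continuous_finset_sum _ (fun a _ => continuous_const.mul (hwc a))
    have hinner : ∀ a : Fin k, ip L (w a) q = c a j := by
      intro a
      rw [hq]
      rw [ip_sum_right Finset.univ (fun a' => c a' j) w (w a)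
        (fun a' _ => contOn_mul_integrable hL.le (hwc a').continuousOn (hwc a).continuousOn)]
      simp only [hw_on a, mul_ite, mul_one, mul_zero]
      rw [Finset.sum_ite_eq Finset.univ a (fun a' => c a' j), if_pos (Finset.mem_univ a)]
    have hipqe : ip L q (e j) = ∑ a, (c a j) ^ 2 := by
      rw [hq]
      rw [ip_sum_left Finset.univ (fun a => c a j) w (e j)
        (fun a _ => contOn_mul_integrable hL.le (hwc a).continuousOn (hec j).continuousOn)]
      exact Finset.sum_congr rfl fun a _ => by
        rw [show ip L (w a) (e j) = c a j from rfl]; ring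
    have hipqq : ip L q q = ∑ a, (c a j) ^ 2 := by
      conv_lhs => rw [hq]
      rw [ip_sum_left Finset.univ (fun a => c a j) w q
        (fun a _ => contOn_mul_integrable hL.le (hwc a).continuousOn hqc.continuousOn)]
      exact Finset.sum_congr rfl fun a _ => by rw [hinner a]; ring
    set Fq : ℝ → ℝ := fun x => e j x - q x with hFq
    have h0 : 0 ≤ ip L Fq Fq := ip_self_nonneg _ hL.le
    have h1 : ip L Fq (e j) = 1 - ∑ a, (c a j) ^ 2 := by
      rw [hFq]
      rw [ip_sub_left (e j) q (e j)
        (contOn_mul_integrable hL.le (hec j).continuousOn (hec j).continuousOn)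
        (contOn_mul_integrable hL.le hqc.continuousOn (hec j).continuousOn)]
      rw [he_on j j, if_pos rfl, hipqe]
    have h2 : ip L Fq q = 0 := by
      rw [hFq]
      rw [ip_sub_left (e j) q q
        (contOn_mul_integrable hL.le (hec j).continuousOn hqc.continuousOn)
        (contOn_mul_integrable hL.le hqc.continuousOn hqc.continuousOn)]
      rw [hipqq, ip_comm (e j) q, hipqe, sub_self]
    have h3 : ip L Fq Fq = 1 - ∑ a, (c a j) ^ 2 := by
      conv_lhs => rw [show ip L Fq Fq = ip L Fq Fq from rfl]
      rw [ip_comm]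
      conv_lhs => rw [hFq]
      rw [ip_sub_left (e j) q Fq
        (contOn_mul_integrable hL.le (hec j).continuousOn ((hec j).sub hqc).continuousOn)
        (contOn_mul_integrable hL.le hqc.continuousOn ((hec j).sub hqc).continuousOn)]
      rw [ip_comm (e j) Fq, ip_comm q Fq, h1, h2, sub_zero]
    linarith [h3 ▸ h0]
  -- pass to the limit
  set t : ℕ → ℝ := fun j => ∑ a, (c a j) ^ 2 with ht
  have htnn : ∀ j, 0 ≤ t j := fun j => Finset.sum_nonneg fun a _ => sq_nonneg _
  set SigH : ℝ := ∑ a, ip L (Hw a) (w a) with hSigH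
  have hswap : ∀ N, ∑ a, ∑ j ∈ Finset.range N, lam j * (c a j) ^ 2
      = ∑ j ∈ Finset.range N, lam j * t j := by
    intro N
    rw [Finset.sum_comm]
    exact Finset.sum_congr rfl fun j _ => by rw [ht, Finset.mul_sum]
  have hswap2 : ∀ N, ∑ a, S a N = ∑ j ∈ Finset.range N, t j := by
    intro N
    rw [hS, ht]
    simp only
    rw [Finset.sum_comm]
  have hTT : Filter.Tendsto (fun N => ∑ j ∈ Finset.range N, lam j * t j)
      Filter.atTop (𝓝 SigH) := by
    have := tendsto_finset_sum (Finset.univ : Finset (Fin k)) (fun a _ => hHlim a)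
    simp only [hswap] at this
    exact this
  have hSS : Filter.Tendsto (fun N => ∑ j ∈ Finset.range N, t j)
      Filter.atTop (𝓝 (k : ℝ)) := by
    have := tendsto_finset_sum (Finset.univ : Finset (Fin k)) (fun a _ => hTend a)
    simp only [hswap2] at this
    simpa using this
  have hperN : ∀ N, k ≤ N →
      ∑ j ∈ Finset.range k, (lam j - lam k)
        ≤ ∑ j ∈ Finset.range N, (lam j - lam k) * t j := by
    intro N hN
    have hsplit : ∑ j ∈ Finset.range N, (lam j - lam k) * t j
        = (∑ j ∈ Finset.range k, (lam j - lam k) * t j)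
          + ∑ j ∈ Finset.Ico k N, (lam j - lam k) * t j := by
      have h := (Finset.sum_Ico_consecutive (fun j => (lam j - lam k) * t j)
        (Nat.zero_le k) hN).symm
      simp only [Finset.range_eq_Ico]
      exact h
    have h1 : ∀ j ∈ Finset.range k, (lam j - lam k) ≤ (lam j - lam k) * t j := by
      intro j hj
      have hjk : j < k := Finset.mem_range.1 hj
      have hneg : lam j - lam k ≤ 0 := sub_nonpos.2 (hlam_mono hjk).le
      nlinarith [hBessel_e j, htnn j]
    have h2 : 0 ≤ ∑ j ∈ Finset.Ico k N, (lam j - lam k) * t j := by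
      apply Finset.sum_nonneg
      intro j hj
      have : k ≤ j := (Finset.mem_Ico.1 hj).1
      exact mul_nonneg (sub_nonneg.2 (hlam_mono.monotone this)) (htnn j)
    calc ∑ j ∈ Finset.range k, (lam j - lam k)
        ≤ ∑ j ∈ Finset.range k, (lam j - lam k) * t j := Finset.sum_le_sum h1
      _ ≤ _ := by rw [hsplit]; linarith
  have hlim2 : Filter.Tendsto (fun N => ∑ j ∈ Finset.range N, (lam j - lam k) * t j)
      Filter.atTop (𝓝 (SigH - lam k * k)) := by
    have heq : ∀ N, ∑ j ∈ Finset.range N, (lam j - lam k) * t j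
        = (∑ j ∈ Finset.range N, lam j * t j) - lam k * ∑ j ∈ Finset.range N, t j := by
      intro N
      rw [Finset.mul_sum, ← Finset.sum_sub_distrib]
      exact Finset.sum_congr rfl fun j _ => by ring
    simp only [heq]
    exact hTT.sub (hSS.const_mul (lam k))
  have hfinal : ∑ j ∈ Finset.range k, (lam j - lam k) ≤ SigH - lam k * k :=
    ge_of_tendsto hlim2 (Filter.eventually_atTop.2 ⟨k, hperN⟩)
  have hHlower : ∑ j ∈ Finset.range k, lam j ≤ SigH := by
    have : ∑ j ∈ Finset.range k, (lam j - lam k)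
        = (∑ j ∈ Finset.range k, lam j) - k * lam k := by
      rw [Finset.sum_sub_distrib, Finset.sum_const, Finset.card_range]
      simp [nsmul_eq_mul]
    rw [this] at hfinal
    linarith
  -- final accounting
  have hsplit_a : ∀ a, ip L (fun x => deriv (deriv (w a)) x - g x * w a x
      + α * w a x + β x * w a x) (w a)
      ≤ α - ip L (Hw a) (w a) := by
    intro a
    have hfun : (fun x => deriv (deriv (w a)) x - g x * w a x + α * w a x + β x * w a x)
        = fun x => (-(Hw a x) + α * w a x) + β x * w a x := by
      ext x; rw [hHw]; ring
    rw [hfun]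
    have hHwc := hHwCO a
    have int1 : IntervalIntegrable (fun x => (-(Hw a x) + α * w a x) * w a x) volume 0 L :=
      contOn_mul_integrable hL.le (hHwc.neg.add ((continuous_const.mul (hwc a)).continuousOn))
        (hwc a).continuousOn
    have int2 : IntervalIntegrable (fun x => (β x * w a x) * w a x) volume 0 L :=
      contOn_mul_integrable hL.le (hβ_cont.mul (hwc a).continuousOn) (hwc a).continuousOn
    rw [ip_add_left _ _ _ int1 int2]
    have e1 : ip L (fun x => -(Hw a x) + α * w a x) (w a)
        = -(ip L (Hw a) (w a)) + α := by
      rw [ip_add_left (fun x => -(Hw a x)) (fun x => α * w a x) (w a)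
        (contOn_mul_integrable hL.le hHwc.neg (hwc a).continuousOn)
        (contOn_mul_integrable hL.le (continuous_const.mul (hwc a)).continuousOn (hwc a).continuousOn),
        ip_neg_left, ip_const_mul_left, hwon1 a, mul_one]
    have e2 : ip L (fun x => β x * w a x) (w a) ≤ 0 := by
      unfold ip
      have : ∀ u ∈ Set.Icc (0:ℝ) L, 0 ≤ -(β u * w a u * w a u) := by
        intro u hu
        have := hβ_nonpos u hu
        nlinarith [sq_nonneg (w a u)]
      have h := intervalIntegral.integral_nonneg (μ := MeasureTheory.volume)
        (f := fun u => -(β u * w a u * w a u)) hL.le this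
      rw [intervalIntegral.integral_neg] at h
      linarith [neg_nonneg.1 h]
    rw [e1]
    linarith
  calc ∑ a, ip L (fun x => deriv (deriv (w a)) x - g x * w a x
        + α * w a x + β x * w a x) (w a)
      ≤ ∑ a : Fin k, (α - ip L (Hw a) (w a)) := Finset.sum_le_sum fun a _ => hsplit_a a
    _ = k * α - SigH := by
        rw [Finset.sum_sub_distrib, Finset.sum_const, hSigH]
        simp [nsmul_eq_mul]
    _ ≤ k * α - ∑ j ∈ Finset.range k, lam j := by linarith
    _ = ∑ j ∈ Finset.range k, (α - lam j) := by
        rw [Finset.sum_sub_distrib, Finset.sum_const, Finset.card_range]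
        simp [nsmul_eq_mul]

section MatrixDeriv
open Matrix

lemma det_updateColumn_diagonal {k : ℕ} (d : Fin k → ℝ) (i : Fin k) (b : Fin k → ℝ) :
    ((Matrix.diagonal d).updateCol i b).det
      = (∏ j ∈ Finset.univ.erase i, d j) * b i := by
  classical
  rw [← Matrix.cramer_apply, Matrix.cramer_eq_adjugate_mulVec, Matrix.adjugate_diagonal,
    Matrix.mulVec_diagonal]

lemma hasDerivAt_det {k : ℕ} (A : ℝ → Matrix (Fin k) (Fin k) ℝ)
    (A' : Matrix (Fin k) (Fin k) ℝ) (t₀ : ℝ)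
    (h : ∀ i j, HasDerivAt (fun t => A t i j) (A' i j) t₀) :
    HasDerivAt (fun t => (A t).det)
      (∑ i, ((A t₀).updateCol i (fun r => A' r i)).det) t₀ := by
  classical
  have hdet : ∀ t, (A t).det = ∑ σ : Equiv.Perm (Fin k),
      (Equiv.Perm.sign σ : ℤ) • ∏ i, A t (σ i) i := fun t => Matrix.det_apply (A t)
  have hD : HasDerivAt (fun t => ∑ σ : Equiv.Perm (Fin k),
      (Equiv.Perm.sign σ : ℤ) • ∏ i, A t (σ i) i)
      (∑ σ : Equiv.Perm (Fin k), (Equiv.Perm.sign σ : ℤ) •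
        ∑ i, (∏ j ∈ Finset.univ.erase i, A t₀ (σ j) j) • A' (σ i) i) t₀ := by
    apply HasDerivAt.fun_sum
    intro σ _
    exact (HasDerivAt.fun_finset_prod (u := Finset.univ) (fun i _ => h (σ i) i)).fun_const_smul (Equiv.Perm.sign σ : ℤ)
  have heqf : (fun t => (A t).det) = (fun t => ∑ σ : Equiv.Perm (Fin k),
      (Equiv.Perm.sign σ : ℤ) • ∏ i, A t (σ i) i) := by
    ext t; exact hdet t
  rw [heqf]
  convert hD using 1
  have hexp : ∀ i : Fin k, ((A t₀).updateCol i (fun r => A' r i)).det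
      = ∑ σ : Equiv.Perm (Fin k),
        (Equiv.Perm.sign σ : ℤ) • (A' (σ i) i * ∏ j ∈ Finset.univ.erase i, A t₀ (σ j) j) := by
    intro i
    rw [Matrix.det_apply]
    apply Finset.sum_congr rfl
    intro σ _
    congr 1
    rw [← Finset.mul_prod_erase Finset.univ _ (Finset.mem_univ i)]
    congr 1
    · rw [Matrix.updateCol_apply, if_pos rfl]
    · apply Finset.prod_congr rfl
      intro j hj
      rw [Matrix.updateCol_apply, if_neg (Finset.ne_of_mem_erase hj)]
  simp only [hexp]
  rw [Finset.sum_comm]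
  apply Finset.sum_congr rfl
  intro σ _
  rw [Finset.smul_sum]
  apply Finset.sum_congr rfl
  intro i _
  congr 1
  rw [smul_eq_mul, mul_comm]

section DiffUnder
open MeasureTheory Set Metric

lemma partial_t_hasDeriv {f : ℝ → ℝ → ℝ}
    (hf : ContDiff ℝ 2 (fun p : ℝ × ℝ => f p.1 p.2)) (x t : ℝ) :
    HasDerivAt (fun s => f x s)
      (fderiv ℝ (fun p : ℝ × ℝ => f p.1 p.2) (x, t) (0, 1)) t := by
  have hdiff : DifferentiableAt ℝ (fun p : ℝ × ℝ => f p.1 p.2) (x, t) :=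
    (hf.differentiable (by norm_num)).differentiableAt
  have hline : HasDerivAt (fun s : ℝ => ((x, s) : ℝ × ℝ)) ((0 : ℝ), (1 : ℝ)) t :=
    (hasDerivAt_const t x).prodMk (hasDerivAt_id t)
  exact (hdiff.hasFDerivAt.comp_hasDerivAt t hline)

lemma partial_t_eq {f : ℝ → ℝ → ℝ}
    (hf : ContDiff ℝ 2 (fun p : ℝ × ℝ => f p.1 p.2)) (x t : ℝ) :
    deriv (fun s => f x s) t = fderiv ℝ (fun p : ℝ × ℝ => f p.1 p.2) (x, t) (0, 1) :=
  (partial_t_hasDeriv hf x t).deriv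

lemma partial_t_cont {f : ℝ → ℝ → ℝ}
    (hf : ContDiff ℝ 2 (fun p : ℝ × ℝ => f p.1 p.2)) :
    Continuous (fun p : ℝ × ℝ => deriv (fun s => f p.1 s) p.2) := by
  have h1 : Continuous (fderiv ℝ (fun p : ℝ × ℝ => f p.1 p.2)) :=
    hf.continuous_fderiv (by norm_num)
  have h2 : Continuous (fun p : ℝ × ℝ =>
      fderiv ℝ (fun p : ℝ × ℝ => f p.1 p.2) p ((0 : ℝ), (1 : ℝ))) :=
    h1.clm_apply continuous_const
  have : (fun p : ℝ × ℝ => deriv (fun s => f p.1 s) p.2)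
      = fun p : ℝ × ℝ => fderiv ℝ (fun p : ℝ × ℝ => f p.1 p.2) p ((0 : ℝ), (1 : ℝ)) := by
    ext p
    exact partial_t_eq hf p.1 p.2
  rw [this]
  exact h2

lemma hasDerivAt_ip_t {L : ℝ} (hL : 0 < L) {f h : ℝ → ℝ → ℝ}
    (hf : ContDiff ℝ 2 (fun p : ℝ × ℝ => f p.1 p.2))
    (hh : ContDiff ℝ 2 (fun p : ℝ × ℝ => h p.1 p.2)) (t₀ : ℝ) :
    HasDerivAt (fun t => ip L (fun x => f x t) (fun x => h x t))
      (∫ x in (0:ℝ)..L, deriv (fun s => f x s) t₀ * h x t₀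
        + f x t₀ * deriv (fun s => h x s) t₀) t₀ := by
  have hfc : Continuous (fun p : ℝ × ℝ => f p.1 p.2) := hf.continuous
  have hhc : Continuous (fun p : ℝ × ℝ => h p.1 p.2) := hh.continuous
  have hdf := partial_t_cont hf
  have hdh := partial_t_cont hh
  set G : ℝ × ℝ → ℝ := fun p => deriv (fun s => f p.1 s) p.2 * h p.1 p.2
    + f p.1 p.2 * deriv (fun s => h p.1 s) p.2 with hG
  have hGc : Continuous G := by
    apply Continuous.add
    · exact hdf.mul hhc
    · exact hfc.mul hdh
  have hslice : ∀ t : ℝ, Continuous fun x => f x t * h x t := by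
    intro t
    have h1 : Continuous fun x : ℝ => f x t :=
      hfc.comp (continuous_id.prodMk continuous_const)
    have h2 : Continuous fun x : ℝ => h x t :=
      hhc.comp (continuous_id.prodMk continuous_const)
    exact h1.mul h2
  have hGslice : Continuous fun x => G (x, t₀) :=
    hGc.comp (continuous_id.prodMk continuous_const)
  -- bound on the compact set
  have hcpt : IsCompact (Set.Icc (0:ℝ) L ×ˢ Set.Icc (t₀ - 1) (t₀ + 1)) :=
    (isCompact_Icc).prod isCompact_Icc
  obtain ⟨C, hC⟩ := hcpt.exists_bound_of_continuousOn hGc.continuousOn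
  have hmeas : ∀ᶠ t in nhds t₀,
      AEStronglyMeasurable (fun x => f x t * h x t)
        (volume.restrict (Set.uIoc (0:ℝ) L)) := by
    filter_upwards with t
    exact (hslice t).aestronglyMeasurable
  have hint : IntervalIntegrable (fun x => f x t₀ * h x t₀) volume 0 L :=
    (hslice t₀).intervalIntegrable 0 L
  have hmeas' : AEStronglyMeasurable (fun x => G (x, t₀))
      (volume.restrict (Set.uIoc (0:ℝ) L)) := hGslice.aestronglyMeasurable
  have hbnd : ∀ᵐ x ∂(volume : Measure ℝ), x ∈ Set.uIoc (0:ℝ) L →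
      ∀ t ∈ Metric.ball t₀ 1, ‖G (x, t)‖ ≤ C := by
    filter_upwards with x hx t ht
    apply hC
    rw [Set.uIoc_of_le hL.le] at hx
    constructor
    · exact ⟨hx.1.le, hx.2⟩
    · have hd := Metric.mem_ball.1 ht
      rw [Real.dist_eq] at hd
      have := abs_lt.1 hd
      exact ⟨by linarith [this.1], by linarith [this.2]⟩
  have hbint : IntervalIntegrable (fun _ : ℝ => C) volume 0 L :=
    intervalIntegrable_const
  have hdiff : ∀ᵐ x ∂(volume : Measure ℝ), x ∈ Set.uIoc (0:ℝ) L →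
      ∀ t ∈ Metric.ball t₀ 1,
        HasDerivAt (fun t => f x t * h x t) (G (x, t)) t := by
    filter_upwards with x _ t _
    have h1 : HasDerivAt (fun s => f x s) (deriv (fun s => f x s) t) t := by
      have := partial_t_hasDeriv hf x t
      rwa [← partial_t_eq hf x t] at this
    have h2 : HasDerivAt (fun s => h x s) (deriv (fun s => h x s) t) t := by
      have := partial_t_hasDeriv hh x t
      rwa [← partial_t_eq hh x t] at this
    exact h1.mul h2
  have := (intervalIntegral.hasDerivAt_integral_of_dominated_loc_of_deriv_le
    (F := fun t x => f x t * h x t) (F' := fun t x => G (x, t))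
    (bound := fun _ => C) (a := (0:ℝ)) (b := L) (μ := volume) (s := Metric.ball t₀ 1)
    (Metric.ball_mem_nhds t₀ one_pos) hmeas hint hmeas' hbnd hbint hdiff).2
  exact this

end DiffUnder


/-- Deterministic content of Theorem 2.1 of the paper (upper bound for the finite-time
Lyapunov exponents): if `b ≤ 0` and `v¹,…,v^k` solve the linearized equation
`∂_t v = ∂_x² v − g v + α v + b v` with Dirichlet boundary conditions, then the Gram
determinant of `(v^a(·,t))` is bounded by `exp(2t·Σ_{j=1}^k (α−λ_j))` times the Gram
determinant at time `0`, where `(e_j, λ_j)` is a Dirichlet eigenbasis of `∂_x² − g`. -/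
theorem stmt_0
    (L : ℝ) (hL : 0 < L)
    (g : ℝ → ℝ) (hg_cont : ContinuousOn g (Set.Icc 0 L))
    (hg_nonneg : ∀ x ∈ Set.Icc 0 L, 0 ≤ g x)
    -- the Dirichlet eigenbasis `(e_j, λ_j)` of the Schrödinger operator `∂_x² − g`
    (e : ℕ → ℝ → ℝ) (lam : ℕ → ℝ)
    (hlam_mono : StrictMono lam)
    (he_smooth : ∀ j, ContDiff ℝ 2 (e j))
    (he_bd0 : ∀ j, e j 0 = 0) (he_bdL : ∀ j, e j L = 0)
    (he_eig : ∀ j, ∀ x ∈ Set.Icc 0 L,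
      -(deriv (deriv (e j)) x) + g x * e j x = lam j * e j x)
    (he_on : ∀ i j, ip L (e i) (e j) = if i = j then 1 else 0)
    -- completeness of the eigenbasis (Parseval identity)
    (he_parseval : ∀ f : ℝ → ℝ, Continuous f → f 0 = 0 → f L = 0 →
      ip L f f = ∑' j, (ip L f (e j)) ^ 2)
    (α : ℝ) (k : ℕ) (hk : 1 ≤ k) (T : ℝ) (hT : 0 < T)
    (b : ℝ → ℝ → ℝ)
    (hb_cont : ContinuousOn (fun p : ℝ × ℝ => b p.1 p.2) (Set.Icc 0 L ×ˢ Set.Icc 0 T))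
    (hb_nonpos : ∀ x ∈ Set.Icc 0 L, ∀ t ∈ Set.Icc 0 T, b x t ≤ 0)
    -- `v¹, …, v^k` are classical solutions of the linearized equation
    (v : Fin k → ℝ → ℝ → ℝ)
    (hv_smooth : ∀ a, ContDiff ℝ 2 (fun p : ℝ × ℝ => v a p.1 p.2))
    (hv_bd0 : ∀ a, ∀ t ∈ Set.Icc 0 T, v a 0 t = 0)
    (hv_bdL : ∀ a, ∀ t ∈ Set.Icc 0 T, v a L t = 0)
    (hv_pde : ∀ a, ∀ x ∈ Set.Icc 0 L, ∀ t ∈ Set.Icc 0 T,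
      deriv (fun s => v a x s) t =
        deriv (deriv (fun y => v a y t)) x - g x * v a x t + α * v a x t
          + b x t * v a x t) :
    ∀ t ∈ Set.Icc 0 T,
      Matrix.det (Matrix.of fun a a' : Fin k =>
          ip L (fun x => v a x t) (fun x => v a' x t))
        ≤ Real.exp (2 * t * ∑ j ∈ Finset.range k, (α - lam j)) *
          Matrix.det (Matrix.of fun a a' : Fin k =>
            ip L (fun x => v a x 0) (fun x => v a' x 0)) := by
  classical
  set cst : ℝ := ∑ j ∈ Finset.range k, (α - lam j) with hcst
  set M : ℝ → Matrix (Fin k) (Fin k) ℝ := fun t => Matrix.of fun a a' : Fin k =>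
    ip L (fun x => v a x t) (fun x => v a' x t) with hM
  -- basic smoothness of time slices
  have hW_smooth : ∀ (a : Fin k) (t : ℝ), ContDiff ℝ 2 (fun x => v a x t) := by
    intro a t
    exact (hv_smooth a).comp (contDiff_id.prodMk contDiff_const)
  have hWc : ∀ (a : Fin k) (t : ℝ), Continuous (fun x => v a x t) :=
    fun a t => (hW_smooth a t).continuous
  -- the key local statement: at each t₀ ∈ [0,T] the determinant has a derivative
  -- bounded by 2⬝cst⬝det
  have main : ∀ t₀ ∈ Set.Icc (0:ℝ) T, ∃ D : ℝ,
      HasDerivAt (fun t => (M t).det) D t₀ ∧ D ≤ 2 * cst * (M t₀).det := by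
    intro t₀ ht₀
    -- slice of b is continuous
    have hbt : ContinuousOn (fun x => b x t₀) (Set.Icc 0 L) := by
      have : (fun x => b x t₀) = (fun p : ℝ × ℝ => b p.1 p.2) ∘ (fun x => (x, t₀)) := rfl
      rw [this]
      apply hb_cont.comp (Continuous.continuousOn (by continuity))
      intro x hx
      exact Set.mk_mem_prod hx ht₀
    set W : Fin k → ℝ → ℝ := fun a x => v a x t₀ with hWdef
    set AW : Fin k → ℝ → ℝ := fun a x => deriv (deriv (fun y => v a y t₀)) x
      - g x * v a x t₀ + α * v a x t₀ + b x t₀ * v a x t₀ with hAW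
    have hAWco : ∀ a, ContinuousOn (AW a) (Set.Icc 0 L) := by
      intro a
      have h1 : Continuous (deriv (deriv (fun y => v a y t₀))) :=
        (c2_facts (hW_smooth a t₀)).2.2
      exact (((h1.continuousOn.sub
        (hg_cont.mul (hWc a t₀).continuousOn)).add
        ((continuous_const.mul (hWc a t₀)).continuousOn)).add
        (hbt.mul (hWc a t₀).continuousOn))
    set M' : Matrix (Fin k) (Fin k) ℝ := Matrix.of fun a a' : Fin k =>
      ip L (AW a) (W a') + ip L (W a) (AW a') with hM'
    -- derivative of the Gram matrix entries
    have hMentry : ∀ a a', HasDerivAt (fun t => M t a a') (M' a a') t₀ := by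
      intro a a'
      have h0 := hasDerivAt_ip_t hL (hv_smooth a) (hv_smooth a') t₀
      have heq : (∫ x in (0:ℝ)..L, deriv (fun s => v a x s) t₀ * v a' x t₀
          + v a x t₀ * deriv (fun s => v a' x s) t₀) = M' a a' := by
        have hcongr : ∀ x ∈ Set.uIcc (0:ℝ) L,
            deriv (fun s => v a x s) t₀ * v a' x t₀
              + v a x t₀ * deriv (fun s => v a' x s) t₀
            = AW a x * W a' x + W a x * AW a' x := by
          intro x hx
          rw [Set.uIcc_of_le hL.le] at hx
          rw [hv_pde a x hx t₀ ht₀, hv_pde a' x hx t₀ ht₀]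
        rw [intervalIntegral.integral_congr hcongr]
        rw [intervalIntegral.integral_add
          (contOn_mul_integrable hL.le (hAWco a) (hWc a' t₀).continuousOn)
          (contOn_mul_integrable hL.le (hWc a t₀).continuousOn (hAWco a'))]
        rfl
      rw [← heq]
      exact h0
    -- spectral decomposition of M t₀
    have hherm : (M t₀).IsHermitian := by
      unfold Matrix.IsHermitian
      ext i j
      rw [Matrix.conjTranspose_apply, star_trivial]
      show M t₀ j i = M t₀ i j
      exact ip_comm _ _
    set Q : Matrix (Fin k) (Fin k) ℝ :=
      (Matrix.IsHermitian.eigenvectorUnitary hherm : Matrix (Fin k) (Fin k) ℝ) with hQ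
    set d : Fin k → ℝ := Matrix.IsHermitian.eigenvalues hherm with hd
    have hunit := (Unitary.mem_iff).1 (Matrix.IsHermitian.eigenvectorUnitary hherm).2
    have hsQQ : star Q * Q = 1 := hunit.1
    have hQsQ : Q * star Q = 1 := hunit.2
    have hdiagonal : star Q * (M t₀) * Q = Matrix.diagonal d := by
      have h : star (Matrix.IsHermitian.eigenvectorUnitary hherm : Matrix (Fin k) (Fin k) ℝ)
          * M t₀ * (Matrix.IsHermitian.eigenvectorUnitary hherm : Matrix (Fin k) (Fin k) ℝ)
          = Matrix.diagonal (RCLike.ofReal ∘ hherm.eigenvalues) := by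
        have h0 := hherm.conjStarAlgAut_star_eigenvectorUnitary
        rw [Unitary.conjStarAlgAut_apply, Unitary.coe_star, star_star] at h0
        exact h0
      rw [show star Q * M t₀ * Q = (star (Matrix.IsHermitian.eigenvectorUnitary hherm
        : Matrix (Fin k) (Fin k) ℝ)) * M t₀ * (Matrix.IsHermitian.eigenvectorUnitary hherm
        : Matrix (Fin k) (Fin k) ℝ) from rfl, h]
      congr 1
    set N : ℝ → Matrix (Fin k) (Fin k) ℝ := fun t => star Q * M t * Q with hN
    have hdetN : ∀ t, (N t).det = (M t).det := by
      intro t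
      rw [hN]
      simp only
      rw [Matrix.det_mul, Matrix.det_mul]
      have h1 : (star Q).det * Q.det = 1 := by
        rw [← Matrix.det_mul, hsQQ, Matrix.det_one]
      linear_combination (M t).det * h1
    -- entries of N and their derivatives
    set P : Matrix (Fin k) (Fin k) ℝ := Matrix.of fun i j : Fin k =>
      ∑ a', (∑ a, Q a i * M' a a') * Q a' j with hP
    have hNentry : ∀ t (i j : Fin k), (star Q * M t * Q) i j
        = ∑ a', (∑ a, Q a i * M t a a') * Q a' j := by
      intro t i j
      simp only [Matrix.mul_apply, Matrix.star_apply, star_trivial]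
    set N : ℝ → Matrix (Fin k) (Fin k) ℝ := fun t => star Q * M t * Q with hN
    have hdetN : ∀ t, (N t).det = (M t).det := by
      intro t
      rw [hN]
      simp only
      rw [Matrix.det_mul, Matrix.det_mul]
      have h1 : (star Q).det * Q.det = 1 := by
        rw [← Matrix.det_mul, hsQQ, Matrix.det_one]
      linear_combination (M t).det * h1
    have hNderiv : ∀ i j, HasDerivAt (fun t => N t i j) (P i j) t₀ := by
      intro i j
      have heq : (fun t => N t i j) = fun t => ∑ a', (∑ a, Q a i * M t a a') * Q a' j := by
        ext t
        rw [hN]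
        exact hNentry t i j
      rw [heq]
      apply HasDerivAt.fun_sum
      intro a' _
      exact (HasDerivAt.fun_sum fun a _ => (hMentry a a').const_mul (Q a i)).mul_const (Q a' j)
    have hNt₀ : N t₀ = Matrix.diagonal d := hdiagonal
    -- derivative of the determinant
    set DN : ℝ := ∑ i, ((N t₀).updateCol i (fun r => P r i)).det with hDN
    have hdetDeriv : HasDerivAt (fun t => (M t).det) DN t₀ := by
      have h1 := hasDerivAt_det N P t₀ hNderiv
      have h2 : (fun t => (N t).det) = fun t => (M t).det := by
        ext t; exact hdetN t
      rwa [h2] at h1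
    have hDNeq : DN = ∑ i, (∏ j ∈ Finset.univ.erase i, d j) * P i i := by
      rw [hDN]
      apply Finset.sum_congr rfl
      intro i _
      rw [hNt₀, det_updateColumn_diagonal]
    have hdetMt₀ : (M t₀).det = ∏ i, d i := by
      rw [← hdetN t₀, hNt₀, Matrix.det_diagonal]
    -- the functions u i
    set u : Fin k → ℝ → ℝ := fun i x => ∑ a, Q a i * v a x t₀ with hu
    have hu_smooth : ∀ i, ContDiff ℝ 2 (u i) := by
      intro i
      apply ContDiff.sum
      intro a _
      exact contDiff_const.mul (hW_smooth a t₀)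
    have huc : ∀ i, Continuous (u i) := fun i => (hu_smooth i).continuous
    have hu0 : ∀ i, u i 0 = 0 := by
      intro i
      rw [hu]
      simp only
      rw [Finset.sum_eq_zero]
      intro a _
      rw [hv_bd0 a t₀ ht₀, mul_zero]
    have huL : ∀ i, u i L = 0 := by
      intro i
      rw [hu]
      simp only
      rw [Finset.sum_eq_zero]
      intro a _
      rw [hv_bdL a t₀ ht₀, mul_zero]
    -- Gram matrix of the u's is diagonal d
    have hipu : ∀ i j, ip L (u i) (u j) = Matrix.diagonal d i j := by
      intro i j
      have h1 : ip L (u i) (u j) = ∑ a, Q a i * ip L (fun x => v a x t₀) (u j) := by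
        rw [hu]
        exact ip_sum_left Finset.univ (fun a => Q a i) (fun a x => v a x t₀) (u j)
          (fun a _ => contOn_mul_integrable hL.le (hWc a t₀).continuousOn (huc j).continuousOn)
      have h2 : ∀ a : Fin k, ip L (fun x => v a x t₀) (u j)
          = ∑ a', Q a' j * M t₀ a a' := by
        intro a
        rw [hu]
        exact ip_sum_right Finset.univ (fun a' => Q a' j) (fun a' x => v a' x t₀)
          (fun x => v a x t₀)
          (fun a' _ => contOn_mul_integrable hL.le (hWc a' t₀).continuousOn
            (hWc a t₀).continuousOn)
      rw [← hdiagonal, hNentry t₀ i j, h1]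
      have h3 : ∀ a : Fin k, Q a i * ip L (fun x => v a x t₀) (u j)
          = ∑ a', Q a i * (Q a' j * M t₀ a a') := by
        intro a
        rw [h2 a, Finset.mul_sum]
      rw [Finset.sum_congr rfl fun a _ => h3 a, Finset.sum_comm]
      apply Finset.sum_congr rfl
      intro a' _
      rw [Finset.sum_mul]
      apply Finset.sum_congr rfl
      intro a _
      ring
    have hdnn : ∀ i, 0 ≤ d i := by
      intro i
      have := ip_self_nonneg (u i) hL.le
      rw [hipu i i, Matrix.diagonal_apply_eq] at this
      exact this
    -- the operator applied to u i
    set AU : Fin k → ℝ → ℝ := fun i x => deriv (deriv (u i)) x - g x * u i x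
      + α * u i x + b x t₀ * u i x with hAU2
    have hAUlin : ∀ i, AU i = fun x => ∑ a, Q a i * AW a x := by
      intro i
      have hdd : deriv (deriv (u i)) = fun x => ∑ a, Q a i
          * deriv (deriv (fun y => v a y t₀)) x := by
        have hstep1 : deriv (u i) = fun x => ∑ a, Q a i * deriv (fun y => v a y t₀) x := by
          ext x
          rw [hu]
          simp only
          rw [deriv_fun_sum]
          · exact Finset.sum_congr rfl fun a _ => deriv_const_mul_field _
          · intro a _
            exact ((c2_facts (hW_smooth a t₀)).1 x).const_mul _
        rw [hstep1]
        ext x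
        rw [deriv_fun_sum]
        · exact Finset.sum_congr rfl fun a _ => deriv_const_mul_field _
        · intro a _
          exact ((c2_facts (hW_smooth a t₀)).2.1 x).const_mul _
      ext x
      rw [hAU2]
      simp only
      rw [hdd, hu]
      simp only
      rw [hAW]
      simp only
      rw [Finset.mul_sum, Finset.mul_sum, Finset.mul_sum, ← Finset.sum_sub_distrib,
        ← Finset.sum_add_distrib, ← Finset.sum_add_distrib]
      apply Finset.sum_congr rfl
      intro a _
      ring
    have hAUco : ∀ i, ContinuousOn (AU i) (Set.Icc 0 L) := by
      intro i
      have h1 : Continuous (deriv (deriv (u i))) := (c2_facts (hu_smooth i)).2.2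
      exact (((h1.continuousOn.sub (hg_cont.mul (huc i).continuousOn)).add
        ((continuous_const.mul (huc i)).continuousOn)).add
        (hbt.mul (huc i).continuousOn))
    -- P i i in terms of u i
    set X : Fin k → Fin k → ℝ := fun a a' => ip L (AW a) (fun x => v a' x t₀) with hX
    have hM'X : ∀ a a', M' a a' = X a a' + X a' a := by
      intro a a'
      rw [hM']
      show ip L (AW a) (W a') + ip L (W a) (AW a') = X a a' + X a' a
      congr 1
      exact ip_comm _ _
    have hipAu : ∀ i, ip L (AU i) (u i)
        = ∑ a, ∑ a', Q a i * Q a' i * X a a' := by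
      intro i
      rw [hAUlin i]
      rw [ip_sum_left Finset.univ (fun a => Q a i) AW (u i)
        (fun a _ => contOn_mul_integrable hL.le (hAWco a) (huc i).continuousOn)]
      apply Finset.sum_congr rfl
      intro a _
      have h2 : ip L (AW a) (u i) = ∑ a', Q a' i * X a a' := by
        rw [hu]
        rw [ip_sum_right Finset.univ (fun a' => Q a' i) (fun a' x => v a' x t₀) (AW a)
          (fun a' _ => contOn_mul_integrable hL.le (hWc a' t₀).continuousOn (hAWco a))]
      rw [h2, Finset.mul_sum]
      apply Finset.sum_congr rfl
      intro a' _
      ring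
    have hPii : ∀ i, P i i = 2 * ip L (AU i) (u i) := by
      intro i
      have h1 : P i i = ∑ a', ∑ a, (Q a i * Q a' i * X a a' + Q a i * Q a' i * X a' a) := by
        rw [hP]
        show (∑ a', (∑ a, Q a i * M' a a') * Q a' i) = _
        apply Finset.sum_congr rfl
        intro a' _
        rw [Finset.sum_mul]
        apply Finset.sum_congr rfl
        intro a _
        rw [hM'X a a']
        ring
      rw [h1]
      simp only [Finset.sum_add_distrib]
      have hswap : ∑ a', ∑ a, Q a i * Q a' i * X a' a
          = ∑ a', ∑ a, Q a i * Q a' i * X a a' := by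
        rw [Finset.sum_comm]
        apply Finset.sum_congr rfl
        intro a _
        apply Finset.sum_congr rfl
        intro a' _
        ring
      rw [hswap, hipAu i, Finset.sum_comm]
      ring
    -- case analysis on the eigenvalues
    by_cases hzero : ∃ i₀, d i₀ = 0
    · obtain ⟨i₀, hi₀⟩ := hzero
      have hdet0 : (M t₀).det = 0 := by
        rw [hdetMt₀]
        exact Finset.prod_eq_zero (Finset.mem_univ i₀) hi₀
      refine ⟨DN, hdetDeriv, ?_⟩
      rw [hdet0, mul_zero, hDNeq]
      apply le_of_eq
      apply Finset.sum_eq_zero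
      intro i _
      by_cases hii : i = i₀
      · subst hii
        have hip0 : ip L (AU i) (u i) = 0 := by
          have hcs := ip_sq_le (AU i) (u i) hL.le (hAUco i) (huc i).continuousOn
          have h0 : ip L (u i) (u i) = 0 := by
            rw [hipu i i, Matrix.diagonal_apply_eq, hi₀]
          rw [h0, mul_zero] at hcs
          have h1 := sq_nonneg (ip L (AU i) (u i))
          have h2 : (ip L (AU i) (u i)) ^ 2 = 0 := le_antisymm hcs h1
          exact sq_eq_zero_iff.1 h2
        rw [hPii i, hip0, mul_zero, mul_zero]
      · have hz : (∏ j ∈ Finset.univ.erase i, d j) = 0 :=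
          Finset.prod_eq_zero (Finset.mem_erase.2 ⟨fun h => hii h.symm, Finset.mem_univ i₀⟩) hi₀
        rw [hz, zero_mul]
    · push_neg at hzero
      have hdpos : ∀ i, 0 < d i := fun i => lt_of_le_of_ne (hdnn i) (Ne.symm (hzero i))
      set w : Fin k → ℝ → ℝ := fun i x => (Real.sqrt (d i))⁻¹ * u i x with hw
      have hsq : ∀ i, Real.sqrt (d i) * Real.sqrt (d i) = d i :=
        fun i => Real.mul_self_sqrt (hdnn i)
      have hsqrt_pos : ∀ i, 0 < Real.sqrt (d i) := fun i => Real.sqrt_pos.2 (hdpos i)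
      have hw_smooth : ∀ i, ContDiff ℝ 2 (w i) := fun i => contDiff_const.mul (hu_smooth i)
      have hw0 : ∀ i, w i 0 = 0 := by
        intro i; rw [hw]; simp only; rw [hu0 i, mul_zero]
      have hwL : ∀ i, w i L = 0 := by
        intro i; rw [hw]; simp only; rw [huL i, mul_zero]
      have hw_on : ∀ i j, ip L (w i) (w j) = if i = j then 1 else 0 := by
        intro i j
        rw [hw]
        simp only
        rw [ip_const_mul_left]
        rw [show ip L (u i) (fun x => (Real.sqrt (d j))⁻¹ * u j x)
            = (Real.sqrt (d j))⁻¹ * ip L (u i) (u j) from by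
          rw [ip_comm, ip_const_mul_left, ip_comm]]
        rw [hipu i j]
        by_cases hij : i = j
        · subst hij
          rw [Matrix.diagonal_apply_eq, if_pos rfl]
          have hne : Real.sqrt (d i) ≠ 0 := (hsqrt_pos i).ne'
          field_simp
          rw [Real.sq_sqrt (hdnn i)]
        · rw [Matrix.diagonal_apply_ne _ hij, if_neg hij, mul_zero, mul_zero]
      have hspec := spectral_bound hL hg_cont hlam_mono he_smooth he_bd0 he_bdL he_eig
        he_on he_parseval α (β := fun x => b x t₀) hbt
        (fun x hx => hb_nonpos x hx t₀ ht₀) w hw_smooth hw0 hwL hw_on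
      have hAw : ∀ i, (fun x => deriv (deriv (w i)) x - g x * w i x + α * w i x
          + b x t₀ * w i x) = fun x => (Real.sqrt (d i))⁻¹ * AU i x := by
        intro i
        have hdd : deriv (deriv (w i))
            = fun x => (Real.sqrt (d i))⁻¹ * deriv (deriv (u i)) x := by
          have hstep : deriv (w i) = fun x => (Real.sqrt (d i))⁻¹ * deriv (u i) x := by
            rw [hw]
            exact deriv_const_mul_field' _
          rw [hstep]
          exact deriv_const_mul_field' _
        ext x
        rw [hdd, hw, hAU2]
        simp only
        ring
      have hip_w : ∀ i, ip L (fun x => deriv (deriv (w i)) x - g x * w i x + α * w i x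
          + b x t₀ * w i x) (w i) = (d i)⁻¹ * ip L (AU i) (u i) := by
        intro i
        rw [hAw i, ip_const_mul_left]
        rw [show ip L (AU i) (w i) = (Real.sqrt (d i))⁻¹ * ip L (AU i) (u i) from by
          rw [ip_comm]
          rw [hw]
          simp only
          rw [ip_const_mul_left, ip_comm]]
        rw [← mul_assoc, ← mul_inv, hsq i]
      refine ⟨DN, hdetDeriv, ?_⟩
      rw [hDNeq, hdetMt₀]
      have hprodpos : 0 < ∏ j, d j := Finset.prod_pos fun j _ => hdpos j
      calc ∑ i, (∏ j ∈ Finset.univ.erase i, d j) * P i i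
          = ∑ i, 2 * (∏ j, d j) * ((d i)⁻¹ * ip L (AU i) (u i)) := by
            apply Finset.sum_congr rfl
            intro i _
            rw [hPii i, ← Finset.prod_erase_mul Finset.univ d (Finset.mem_univ i)]
            have : d i ≠ 0 := (hdpos i).ne'
            field_simp
        _ = 2 * (∏ j, d j) * ∑ i, (d i)⁻¹ * ip L (AU i) (u i) := by
            rw [Finset.mul_sum]
        _ ≤ 2 * (∏ j, d j) * cst := by
            apply mul_le_mul_of_nonneg_left _ (by positivity)
            rw [show (∑ i, (d i)⁻¹ * ip L (AU i) (u i))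
                = ∑ i, ip L (fun x => deriv (deriv (w i)) x - g x * w i x + α * w i x
                  + b x t₀ * w i x) (w i) from
              (Finset.sum_congr rfl fun i _ => (hip_w i).symm)]
            exact hspec
        _ = 2 * cst * ∏ j, d j := by ring
  -- Gronwall argument
  intro t ht
  set φ : ℝ → ℝ := fun s => Real.exp (-(2 * cst) * s) * (M s).det with hφ
  have hφderiv : ∀ s ∈ Set.Icc (0:ℝ) T, ∃ Dv, HasDerivAt φ Dv s ∧ Dv ≤ 0 := by
    intro s hs
    obtain ⟨D, hD, hDle⟩ := main s hs
    have hexp : HasDerivAt (fun s : ℝ => Real.exp (-(2 * cst) * s))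
        (Real.exp (-(2 * cst) * s) * (-(2 * cst) * 1)) s :=
      ((hasDerivAt_id s).const_mul (-(2 * cst))).exp
    refine ⟨_, hexp.mul hD, ?_⟩
    have hE := Real.exp_pos (-(2 * cst) * s)
    nlinarith [hE, hDle]
  have hcont : ContinuousOn φ (Set.Icc 0 T) := by
    intro s hs
    obtain ⟨Dv, hDv, _⟩ := hφderiv s hs
    exact hDv.continuousAt.continuousWithinAt
  have hanti : AntitoneOn φ (Set.Icc 0 T) := by
    apply antitoneOn_of_deriv_nonpos (convex_Icc 0 T) hcont
    · intro s hs
      rw [interior_Icc] at hs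
      obtain ⟨Dv, hDv, _⟩ := hφderiv s ⟨hs.1.le, hs.2.le⟩
      exact hDv.differentiableAt.differentiableWithinAt
    · intro s hs
      rw [interior_Icc] at hs
      obtain ⟨Dv, hDv, hle⟩ := hφderiv s ⟨hs.1.le, hs.2.le⟩
      rw [hDv.deriv]
      exact hle
  have h0mem : (0:ℝ) ∈ Set.Icc (0:ℝ) T := ⟨le_refl 0, hT.le⟩
  have hmono := hanti h0mem ht ht.1
  have hφ0 : φ 0 = (M 0).det := by
    rw [hφ]; simp
  have hφt : φ t = Real.exp (-(2 * cst) * t) * (M t).det := rfl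
  rw [hφ0, hφt] at hmono
  have hEpos := Real.exp_pos (-(2 * cst) * t)
  have hgoal : (M t).det ≤ Real.exp (2 * t * cst) * (M 0).det := by
    have h1 : Real.exp (2 * t * cst) * (Real.exp (-(2 * cst) * t) * (M t).det)
        ≤ Real.exp (2 * t * cst) * (M 0).det :=
      mul_le_mul_of_nonneg_left hmono (Real.exp_pos _).le
    have h2 : Real.exp (2 * t * cst) * Real.exp (-(2 * cst) * t) = 1 := by
      rw [← Real.exp_add]
      rw [show 2 * t * cst + -(2 * cst) * t = 0 from by ring]
      exact Real.exp_zero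
    calc (M t).det = (Real.exp (2 * t * cst) * Real.exp (-(2 * cst) * t)) * (M t).det := by
          rw [h2, one_mul]
      _ = Real.exp (2 * t * cst) * (Real.exp (-(2 * cst) * t) * (M t).det) := by ring
      _ ≤ Real.exp (2 * t * cst) * (M 0).det := h1
  exact hgoal
end MatrixDeriv
end

section
/- For all f₁, f₂ ∈ H the covariance bilinear form admits the iterated series representation ⟨V∞ f₁, f₂⟩ = Σ_{j₁=1}^∞ Σ_{j₂=1}^∞ [σ² ⟨f₁, e_{j₂}⟩ ⟨f₂, e_{j₁}⟩ / (λ_{j₁} + λ_{j₂} − 2α)] · (Σ_{n=1}^∞ q_n ⟨e_{j₁}, b_n⟩ ⟨e_{j₂}, b_n⟩), where the inner series over j₂ (for each fixed j₁) and the outer series over j₁ converge, as does the series over n. (This is the paper's Theorem 3.2.) -/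
open scoped RealInnerProductSpace
open MeasureTheory

/-- The semigroup `S(t)f := Σ_j e^{(α−λ_j)t}⟨f, e_j⟩ e_j` generated by the diagonal
operator with eigenvalues `α − λ_j` in the orthonormal basis `(e_j)`. -/
noncomputable def Sop {H : Type*} [NormedAddCommGroup H] [InnerProductSpace ℝ H]
    (e : ℕ → H) (lam : ℕ → ℝ) (α : ℝ) (t : ℝ) (f : H) : H :=
  ∑' j, (Real.exp ((α - lam j) * t) * ⟪f, e j⟫) • e j

set_option linter.unusedSectionVars false
section AuxLemmas

lemma aux_hasSum_congr {α : Type*} [AddCommMonoid α] [TopologicalSpace α]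
    {f g : ℕ → α} {a : α} (h : HasSum f a) (he : ∀ n, f n = g n) : HasSum g a := by
  rwa [funext he] at h

lemma aux_integral_exp_neg {r : ℝ} (hr : 0 < r) :
    ∫ t in Set.Ioi (0:ℝ), Real.exp (-(r * t)) = 1 / r := by
  have h := Real.integral_rpow_mul_exp_neg_mul_Ioi (a := 1) one_pos hr
  simp only [sub_self, Real.rpow_zero, one_mul, Real.Gamma_one, Real.rpow_one, mul_one] at h
  exact h

lemma aux_summable_abs_mul {u v : ℕ → ℝ} (hu : Summable (fun j => u j ^ 2))
    (hv : Summable (fun j => v j ^ 2)) : Summable (fun j => |u j| * |v j|) := by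
  refine Summable.of_nonneg_of_le (fun j => by positivity) (fun j => ?_) ((hu.add hv).div_const 2)
  nlinarith [sq_nonneg (|u j| - |v j|), sq_abs (u j), sq_abs (v j), abs_nonneg (u j), abs_nonneg (v j)]

lemma aux_tsum_abs_mul_le {u v : ℕ → ℝ} (hu : Summable (fun j => u j ^ 2))
    (hv : Summable (fun j => v j ^ 2)) :
    ∑' j, |u j| * |v j| ≤ ((∑' j, u j ^ 2) + ∑' j, v j ^ 2) / 2 := by
  have hpt : ∀ j, |u j| * |v j| ≤ (u j ^ 2 + v j ^ 2) / 2 := fun j => by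
    nlinarith [sq_nonneg (|u j| - |v j|), sq_abs (u j), sq_abs (v j),
      abs_nonneg (u j), abs_nonneg (v j)]
  have hle := Summable.tsum_le_tsum hpt (aux_summable_abs_mul hu hv) ((hu.add hv).div_const 2)
  rwa [tsum_div_const, Summable.tsum_add hu hv] at hle

variable {H : Type*} [NormedAddCommGroup H] [InnerProductSpace ℝ H] [CompleteSpace H]

lemma aux_parseval_summable (e : HilbertBasis ℕ ℝ H) (x : H) :
    Summable (fun j => ⟪x, (e j : H)⟫ ^ 2) := by
  refine (e.summable_inner_mul_inner x x).congr fun j => ?_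
  rw [pow_two, real_inner_comm (e j : H) x]

lemma aux_parseval_tsum (e : HilbertBasis ℕ ℝ H) (x : H) :
    ∑' j, ⟪x, (e j : H)⟫ ^ 2 = ‖x‖ ^ 2 := by
  have h := e.tsum_inner_mul_inner x x
  rw [real_inner_self_eq_norm_sq] at h
  rw [← h]
  exact tsum_congr fun j => by rw [pow_two, real_inner_comm (e j : H) x]

lemma aux_abs_inner_summable (e : HilbertBasis ℕ ℝ H) (x y : H) :
    Summable (fun j => |⟪x, (e j : H)⟫| * |⟪y, (e j : H)⟫|) :=
  aux_summable_abs_mul (aux_parseval_summable e x) (aux_parseval_summable e y)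

lemma aux_abs_inner_tsum_le (e : HilbertBasis ℕ ℝ H) (x y : H) :
    ∑' j, |⟪x, (e j : H)⟫| * |⟪y, (e j : H)⟫| ≤ (‖x‖ ^ 2 + ‖y‖ ^ 2) / 2 := by
  have h := aux_tsum_abs_mul_le (aux_parseval_summable e x) (aux_parseval_summable e y)
  rwa [aux_parseval_tsum, aux_parseval_tsum] at h

lemma sop_hasSum (e : HilbertBasis ℕ ℝ H) (lam : ℕ → ℝ) (α t : ℝ) (f : H)
    (hle : ∀ j, Real.exp ((α - lam j) * t) ≤ 1) :
    HasSum (fun j => (Real.exp ((α - lam j) * t) * ⟪f, (e j : H)⟫) • (e j : H))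
      (Sop (fun j => (e j : H)) lam α t f) := by
  have hmem : Memℓp (fun j => Real.exp ((α - lam j) * t) * ⟪f, (e j : H)⟫) 2 := by
    apply memℓp_gen
    have h2 := (memℓp_gen_iff (p := 2) (by norm_num)).mp (lp.memℓp (e.repr f))
    refine Summable.of_nonneg_of_le (fun j => by positivity) (fun j => ?_) h2
    apply Real.rpow_le_rpow (norm_nonneg _) ?_ ENNReal.toReal_nonneg
    rw [e.repr_apply_apply, real_inner_comm (e j : H) f, Real.norm_eq_abs, Real.norm_eq_abs,
      abs_mul, abs_of_nonneg (Real.exp_pos _).le]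
    exact mul_le_of_le_one_left (abs_nonneg _) (hle j)
  have hx := e.hasSum_repr_symm ⟨_, hmem⟩
  have hS : Sop (fun j => (e j : H)) lam α t f = e.repr.symm ⟨_, hmem⟩ := hx.tsum_eq
  rw [hS]
  exact hx

lemma sop_inner (e : HilbertBasis ℕ ℝ H) (lam : ℕ → ℝ) (α t : ℝ) (f : H)
    (hle : ∀ j, Real.exp ((α - lam j) * t) ≤ 1) (k : ℕ) :
    ⟪Sop (fun j => (e j : H)) lam α t f, (e k : H)⟫
      = Real.exp ((α - lam k) * t) * ⟪f, (e k : H)⟫ := by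
  have hx := sop_hasSum e lam α t f hle
  have h2 := hx.mapL (innerSL ℝ (e k : H))
  have h3 : HasSum (fun j : ℕ => if j = k then Real.exp ((α - lam k) * t) * ⟪f, (e k : H)⟫ else 0)
      (Real.exp ((α - lam k) * t) * ⟪f, (e k : H)⟫) := hasSum_ite_eq k _
  rw [real_inner_comm]
  refine HasSum.unique ?_ h3
  refine aux_hasSum_congr h2 (fun j => ?_)
  have horth : ⟪(e k : H), (e j : H)⟫ = if k = j then 1 else 0 :=
    orthonormal_iff_ite.mp e.orthonormal k j
  rw [innerSL_apply_apply, real_inner_smul_right, horth]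
  by_cases h : j = k
  · subst h; simp
  · simp [h, Ne.symm h]

lemma sop_norm_le (e : HilbertBasis ℕ ℝ H) (lam : ℕ → ℝ) (α t : ℝ) (f : H) (C : ℝ)
    (hle : ∀ j, Real.exp ((α - lam j) * t) ≤ 1)
    (hleC : ∀ j, Real.exp ((α - lam j) * t) ≤ C) :
    ‖Sop (fun j => (e j : H)) lam α t f‖ ≤ C * ‖f‖ := by
  have hC : 0 ≤ C := le_trans (Real.exp_pos _).le (hleC 0)
  set x := Sop (fun j => (e j : H)) lam α t f with hxdef
  have hco : ∀ k, ⟪x, (e k : H)⟫ = Real.exp ((α - lam k) * t) * ⟪f, (e k : H)⟫ :=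
    sop_inner e lam α t f hle
  have h1 : ‖x‖ ^ 2 ≤ C ^ 2 * ‖f‖ ^ 2 := by
    rw [← aux_parseval_tsum e x]
    have hb : ∀ k, ⟪x, (e k : H)⟫ ^ 2 ≤ C ^ 2 * ⟪f, (e k : H)⟫ ^ 2 := by
      intro k
      rw [hco k, mul_pow]
      have h1 := hleC k
      have h2 := (Real.exp_pos ((α - lam k) * t)).le
      have h3 : Real.exp ((α - lam k) * t) ^ 2 ≤ C ^ 2 := by nlinarith
      exact mul_le_mul_of_nonneg_right h3 (sq_nonneg _)
    calc ∑' k, ⟪x, (e k : H)⟫ ^ 2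
        ≤ ∑' k, C ^ 2 * ⟪f, (e k : H)⟫ ^ 2 :=
          Summable.tsum_le_tsum hb (aux_parseval_summable e x) ((aux_parseval_summable e f).mul_left _)
      _ = C ^ 2 * ∑' k, ⟪f, (e k : H)⟫ ^ 2 := tsum_mul_left
      _ = C ^ 2 * ‖f‖ ^ 2 := by rw [aux_parseval_tsum]
  have h2 : ‖x‖ ^ 2 ≤ (C * ‖f‖) ^ 2 := by rw [mul_pow]; exact h1
  have h3 := Real.sqrt_le_sqrt h2
  rwa [Real.sqrt_sq (norm_nonneg _), Real.sqrt_sq (by positivity)] at h3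

end AuxLemmas

set_option maxHeartbeats 1000000

/-- Theorem 3.2 of the paper: the stationary covariance bilinear form
`⟨V∞ f₁, f₂⟩ = σ²∫₀^∞ ⟨Q S(t) f₁, S(t) f₂⟩ dt` admits the iterated series representation
`Σ_{j₁}Σ_{j₂} σ²⟨f₁,e_{j₂}⟩⟨f₂,e_{j₁}⟩/(λ_{j₁}+λ_{j₂}−2α) · Σ_n q_n⟨e_{j₁},b_n⟩⟨e_{j₂},b_n⟩`,
the inner series over `j₂`, the outer series over `j₁`, and the series over `n` all
converging. -/
theorem stmt_4 {H : Type*} [NormedAddCommGroup H] [InnerProductSpace ℝ H]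
    [CompleteSpace H]
    (e : HilbertBasis ℕ ℝ H) (b : HilbertBasis ℕ ℝ H)
    (lam : ℕ → ℝ) (hlam : ∀ j, lam 0 ≤ lam j)
    (α : ℝ) (hα : α < lam 0) (σ : ℝ) (hσ : 0 < σ)
    (Q : H →L[ℝ] H) (hQ_sa : ∀ f h : H, ⟪Q f, h⟫ = ⟪f, Q h⟫)
    (q : ℕ → ℝ) (qstar : ℝ)
    (hq_nonneg : ∀ n, 0 ≤ q n) (hq_bd : ∀ n, q n ≤ qstar)
    (hQ_eig : ∀ n, Q (b n) = q n • b n) :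
    ∀ f₁ f₂ : H,
      (∀ j₁ j₂ : ℕ, Summable (fun n => q n * ⟪(e j₁ : H), b n⟫ * ⟪(e j₂ : H), b n⟫)) ∧
      (∀ j₁ : ℕ, Summable (fun j₂ =>
        σ ^ 2 * ⟪f₁, (e j₂ : H)⟫ * ⟪f₂, (e j₁ : H)⟫ / (lam j₁ + lam j₂ - 2 * α)
          * ∑' n, q n * ⟪(e j₁ : H), b n⟫ * ⟪(e j₂ : H), b n⟫)) ∧
      Summable (fun j₁ => ∑' j₂,
        σ ^ 2 * ⟪f₁, (e j₂ : H)⟫ * ⟪f₂, (e j₁ : H)⟫ / (lam j₁ + lam j₂ - 2 * α)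
          * ∑' n, q n * ⟪(e j₁ : H), b n⟫ * ⟪(e j₂ : H), b n⟫) ∧
      σ ^ 2 * (∫ t in Set.Ioi (0:ℝ),
          ⟪Q (Sop (fun j => e j) lam α t f₁), Sop (fun j => e j) lam α t f₂⟫)
        = ∑' j₁, ∑' j₂,
            σ ^ 2 * ⟪f₁, (e j₂ : H)⟫ * ⟪f₂, (e j₁ : H)⟫ / (lam j₁ + lam j₂ - 2 * α)
              * ∑' n, q n * ⟪(e j₁ : H), b n⟫ * ⟪(e j₂ : H), b n⟫ := by
  intro f₁ f₂
  have hβ : 0 < lam 0 - α := sub_pos.mpr hα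
  have hden : ∀ j₁ j₂ : ℕ, 0 < lam j₁ + lam j₂ - 2 * α := by
    intro j₁ j₂; have h1 := hlam j₁; have h2 := hlam j₂; linarith
  have hden2 : ∀ j₁ j₂ : ℕ, 2 * (lam 0 - α) ≤ lam j₁ + lam j₂ - 2 * α := by
    intro j₁ j₂; have h1 := hlam j₁; have h2 := hlam j₂; linarith
  have hsq₁ : Summable (fun j => ⟪f₁, (e j : H)⟫ ^ 2) := aux_parseval_summable e f₁
  have hsq₂ : Summable (fun j => ⟪f₂, (e j : H)⟫ ^ 2) := aux_parseval_summable e f₂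
  have hsqQ : ∀ k : ℕ, Summable (fun j => ⟪Q (e k : H), (e j : H)⟫ ^ 2) := fun k =>
    aux_parseval_summable e (Q (e k : H))
  -- the series over n
  have hterm : ∀ j₁ j₂ n : ℕ, ⟪Q (e j₁ : H), (b n : H)⟫ * ⟪(b n : H), (e j₂ : H)⟫
      = q n * ⟪(e j₁ : H), (b n : H)⟫ * ⟪(e j₂ : H), (b n : H)⟫ := by
    intro j₁ j₂ n
    have h1 : ⟪Q (e j₁ : H), (b n : H)⟫ = q n * ⟪(e j₁ : H), (b n : H)⟫ := by
      rw [hQ_sa, hQ_eig, real_inner_smul_right]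
    have h2 : ⟪(b n : H), (e j₂ : H)⟫ = ⟪(e j₂ : H), (b n : H)⟫ := real_inner_comm _ _
    rw [h1, h2]
  have hn_sum : ∀ j₁ j₂ : ℕ,
      Summable (fun n => q n * ⟪(e j₁ : H), (b n : H)⟫ * ⟪(e j₂ : H), (b n : H)⟫) := by
    intro j₁ j₂
    exact (b.summable_inner_mul_inner (Q (e j₁ : H)) (e j₂ : H)).congr (hterm j₁ j₂)
  have hn_val : ∀ j₁ j₂ : ℕ,
      (∑' n, q n * ⟪(e j₁ : H), (b n : H)⟫ * ⟪(e j₂ : H), (b n : H)⟫)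
        = ⟪Q (e j₁ : H), (e j₂ : H)⟫ := by
    intro j₁ j₂
    rw [← b.tsum_inner_mul_inner (Q (e j₁ : H)) (e j₂ : H)]
    exact (tsum_congr (hterm j₁ j₂)).symm
  have hm_sum : ∀ j₁ : ℕ,
      Summable (fun j₂ => |⟪f₁, (e j₂ : H)⟫| * |⟪Q (e j₁ : H), (e j₂ : H)⟫|) := fun j₁ =>
    aux_summable_abs_mul hsq₁ (hsqQ j₁)
  -- inner summability
  have hin_sum : ∀ j₁ : ℕ, Summable (fun j₂ =>
      σ ^ 2 * ⟪f₁, (e j₂ : H)⟫ * ⟪f₂, (e j₁ : H)⟫ / (lam j₁ + lam j₂ - 2 * α)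
        * ∑' n, q n * ⟪(e j₁ : H), b n⟫ * ⟪(e j₂ : H), b n⟫) := by
    intro j₁
    refine Summable.of_norm_bounded
      (g := fun j₂ => (σ ^ 2 * |⟪f₂, (e j₁ : H)⟫| / (2 * (lam 0 - α)))
        * (|⟪f₁, (e j₂ : H)⟫| * |⟪Q (e j₁ : H), (e j₂ : H)⟫|))
      ((hm_sum j₁).mul_left _) (fun j₂ => ?_)
    rw [hn_val j₁ j₂, Real.norm_eq_abs, abs_mul, abs_div, abs_mul, abs_mul,
      abs_of_nonneg (sq_nonneg σ), abs_of_pos (hden j₁ j₂)]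
    calc σ ^ 2 * |⟪f₁, (e j₂ : H)⟫| * |⟪f₂, (e j₁ : H)⟫| / (lam j₁ + lam j₂ - 2 * α)
          * |⟪Q (e j₁ : H), (e j₂ : H)⟫|
        ≤ σ ^ 2 * |⟪f₁, (e j₂ : H)⟫| * |⟪f₂, (e j₁ : H)⟫| / (2 * (lam 0 - α))
          * |⟪Q (e j₁ : H), (e j₂ : H)⟫| := by
          have h1 : σ ^ 2 * |⟪f₁, (e j₂ : H)⟫| * |⟪f₂, (e j₁ : H)⟫| / (lam j₁ + lam j₂ - 2 * α)
              ≤ σ ^ 2 * |⟪f₁, (e j₂ : H)⟫| * |⟪f₂, (e j₁ : H)⟫| / (2 * (lam 0 - α)) :=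
            div_le_div_of_nonneg_left (by positivity) (by positivity) (hden2 j₁ j₂)
          exact mul_le_mul_of_nonneg_right h1 (abs_nonneg _)
      _ = (σ ^ 2 * |⟪f₂, (e j₁ : H)⟫| / (2 * (lam 0 - α)))
          * (|⟪f₁, (e j₂ : H)⟫| * |⟪Q (e j₁ : H), (e j₂ : H)⟫|) := by ring
  -- exponential bounds
  have hexp1 : ∀ t : ℝ, 0 ≤ t → ∀ j, Real.exp ((α - lam j) * t) ≤ 1 := by
    intro t ht j
    rw [Real.exp_le_one_iff]
    have h1 : (0:ℝ) ≤ lam j - α := by linarith [hlam j]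
    nlinarith [mul_nonneg h1 ht]
  have hexpβ : ∀ t : ℝ, 0 ≤ t → ∀ j,
      Real.exp ((α - lam j) * t) ≤ Real.exp (-((lam 0 - α) * t)) := by
    intro t ht j
    apply Real.exp_le_exp.mpr
    nlinarith [mul_nonneg (sub_nonneg.mpr (hlam j)) ht]
  have hSopnorm : ∀ t : ℝ, 0 ≤ t → ‖Sop (fun j => (e j : H)) lam α t f₁‖ ≤ ‖f₁‖ := by
    intro t ht
    simpa using sop_norm_le e lam α t f₁ 1 (hexp1 t ht) (hexp1 t ht)
  -- pointwise expansion of the inner coefficient (P1)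
  have hP1 : ∀ (j₁ : ℕ) (t : ℝ), 0 ≤ t → HasSum
      (fun j₂ => (⟪f₂, (e j₁ : H)⟫ * ⟪f₁, (e j₂ : H)⟫ * ⟪Q (e j₁ : H), (e j₂ : H)⟫)
        * Real.exp (-((lam j₁ + lam j₂ - 2 * α) * t)))
      (Real.exp ((α - lam j₁) * t) * ⟪f₂, (e j₁ : H)⟫
        * ⟪Q (Sop (fun j => (e j : H)) lam α t f₁), (e j₁ : H)⟫) := by
    intro j₁ t ht
    have h := ((sop_hasSum e lam α t f₁ (hexp1 t ht)).mapL (innerSL ℝ (Q (e j₁ : H)))).mul_left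
      (Real.exp ((α - lam j₁) * t) * ⟪f₂, (e j₁ : H)⟫)
    simp only [innerSL_apply_apply, real_inner_smul_right] at h
    have hpt : ⟪Q (e j₁ : H), Sop (fun j => (e j : H)) lam α t f₁⟫
        = ⟪Q (Sop (fun j => (e j : H)) lam α t f₁), (e j₁ : H)⟫ := by
      rw [real_inner_comm, ← hQ_sa]
    rw [hpt] at h
    refine aux_hasSum_congr h (fun j₂ => ?_)
    have hEE : Real.exp (-((lam j₁ + lam j₂ - 2 * α) * t))
        = Real.exp ((α - lam j₁) * t) * Real.exp ((α - lam j₂) * t) := by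
      rw [← Real.exp_add]; congr 1; ring
    rw [hEE]; ring
  -- pointwise expansion of the integrand (P2)
  have hP2 : ∀ t : ℝ, 0 ≤ t → HasSum
      (fun j₁ => Real.exp ((α - lam j₁) * t) * ⟪f₂, (e j₁ : H)⟫
        * ⟪Q (Sop (fun j => (e j : H)) lam α t f₁), (e j₁ : H)⟫)
      ⟪Q (Sop (fun j => (e j : H)) lam α t f₁), Sop (fun j => (e j : H)) lam α t f₂⟫ := by
    intro t ht
    have h := (sop_hasSum e lam α t f₂ (hexp1 t ht)).mapL
      (innerSL ℝ (Q (Sop (fun j => (e j : H)) lam α t f₁)))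
    simp only [innerSL_apply_apply, real_inner_smul_right] at h
    refine aux_hasSum_congr h (fun j₁ => ?_)
    ring
  -- integrability and value of the elementary integrals
  have hK_int : ∀ j₁ j₂ : ℕ, IntegrableOn (fun t : ℝ =>
      (⟪f₂, (e j₁ : H)⟫ * ⟪f₁, (e j₂ : H)⟫ * ⟪Q (e j₁ : H), (e j₂ : H)⟫)
        * Real.exp (-((lam j₁ + lam j₂ - 2 * α) * t))) (Set.Ioi 0) := by
    intro j₁ j₂
    have h := (exp_neg_integrableOn_Ioi 0 (hden j₁ j₂)).const_mul
      (⟪f₂, (e j₁ : H)⟫ * ⟪f₁, (e j₂ : H)⟫ * ⟪Q (e j₁ : H), (e j₂ : H)⟫)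
    simpa only [neg_mul, IntegrableOn] using h
  have hK_val : ∀ j₁ j₂ : ℕ, (∫ t in Set.Ioi (0:ℝ),
      (⟪f₂, (e j₁ : H)⟫ * ⟪f₁, (e j₂ : H)⟫ * ⟪Q (e j₁ : H), (e j₂ : H)⟫)
        * Real.exp (-((lam j₁ + lam j₂ - 2 * α) * t)))
      = (⟪f₂, (e j₁ : H)⟫ * ⟪f₁, (e j₂ : H)⟫ * ⟪Q (e j₁ : H), (e j₂ : H)⟫)
        * (1 / (lam j₁ + lam j₂ - 2 * α)) := by
    intro j₁ j₂
    rw [MeasureTheory.integral_const_mul, aux_integral_exp_neg (hden j₁ j₂)]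
  have hK_lint : ∀ j₁ j₂ : ℕ, (∫⁻ t in Set.Ioi (0:ℝ),
      ‖(⟪f₂, (e j₁ : H)⟫ * ⟪f₁, (e j₂ : H)⟫ * ⟪Q (e j₁ : H), (e j₂ : H)⟫)
        * Real.exp (-((lam j₁ + lam j₂ - 2 * α) * t))‖ₑ)
      = ENNReal.ofReal (|⟪f₂, (e j₁ : H)⟫ * ⟪f₁, (e j₂ : H)⟫ * ⟪Q (e j₁ : H), (e j₂ : H)⟫|
        * (1 / (lam j₁ + lam j₂ - 2 * α))) := by
    intro j₁ j₂
    rw [← ofReal_integral_norm_eq_lintegral_enorm (hK_int j₁ j₂)]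
    congr 1
    simp only [Real.norm_eq_abs, abs_mul, Real.abs_exp]
    rw [← abs_mul, ← abs_mul, MeasureTheory.integral_const_mul, aux_integral_exp_neg (hden j₁ j₂)]
  have hsum_mr : ∀ j₁ : ℕ, Summable (fun j₂ =>
      |⟪f₂, (e j₁ : H)⟫ * ⟪f₁, (e j₂ : H)⟫ * ⟪Q (e j₁ : H), (e j₂ : H)⟫|
        * (1 / (lam j₁ + lam j₂ - 2 * α))) := by
    intro j₁
    refine Summable.of_nonneg_of_le
      (fun j₂ => mul_nonneg (abs_nonneg _) (one_div_nonneg.mpr (hden j₁ j₂).le))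
      (fun j₂ => ?_) ((hm_sum j₁).mul_left (|⟪f₂, (e j₁ : H)⟫| * (1 / (2 * (lam 0 - α)))))
    rw [abs_mul, abs_mul]
    have h1 : 1 / (lam j₁ + lam j₂ - 2 * α) ≤ 1 / (2 * (lam 0 - α)) :=
      one_div_le_one_div_of_le (by positivity) (hden2 j₁ j₂)
    calc |⟪f₂, (e j₁ : H)⟫| * |⟪f₁, (e j₂ : H)⟫| * |⟪Q (e j₁ : H), (e j₂ : H)⟫|
          * (1 / (lam j₁ + lam j₂ - 2 * α))
        ≤ |⟪f₂, (e j₁ : H)⟫| * |⟪f₁, (e j₂ : H)⟫| * |⟪Q (e j₁ : H), (e j₂ : H)⟫|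
          * (1 / (2 * (lam 0 - α))) := by
          refine mul_le_mul_of_nonneg_left h1 (by positivity)
      _ = |⟪f₂, (e j₁ : H)⟫| * (1 / (2 * (lam 0 - α)))
          * (|⟪f₁, (e j₂ : H)⟫| * |⟪Q (e j₁ : H), (e j₂ : H)⟫|) := by ring
  -- step I : inner interchange
  have hI : ∀ j₁ : ℕ, (∫ t in Set.Ioi (0:ℝ),
      Real.exp ((α - lam j₁) * t) * ⟪f₂, (e j₁ : H)⟫
        * ⟪Q (Sop (fun j => (e j : H)) lam α t f₁), (e j₁ : H)⟫)
      = ∑' j₂, (⟪f₂, (e j₁ : H)⟫ * ⟪f₁, (e j₂ : H)⟫ * ⟪Q (e j₁ : H), (e j₂ : H)⟫)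
        * (1 / (lam j₁ + lam j₂ - 2 * α)) := by
    intro j₁
    have h1 : Set.EqOn (fun t => Real.exp ((α - lam j₁) * t) * ⟪f₂, (e j₁ : H)⟫
        * ⟪Q (Sop (fun j => (e j : H)) lam α t f₁), (e j₁ : H)⟫)
        (fun t => ∑' j₂, (⟪f₂, (e j₁ : H)⟫ * ⟪f₁, (e j₂ : H)⟫ * ⟪Q (e j₁ : H), (e j₂ : H)⟫)
          * Real.exp (-((lam j₁ + lam j₂ - 2 * α) * t))) (Set.Ioi 0) :=
      fun t ht => ((hP1 j₁ t (le_of_lt (Set.mem_Ioi.mp ht))).tsum_eq).symm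
    rw [setIntegral_congr_fun measurableSet_Ioi h1]
    rw [integral_tsum (fun j₂ => Continuous.aestronglyMeasurable (by fun_prop)) ?_]
    · exact tsum_congr (fun j₂ => hK_val j₁ j₂)
    · rw [tsum_congr (fun j₂ => hK_lint j₁ j₂),
        ← ENNReal.ofReal_tsum_of_nonneg (fun j₂ => mul_nonneg (abs_nonneg _)
          (one_div_nonneg.mpr (hden j₁ j₂).le)) (hsum_mr j₁)]
      exact ENNReal.ofReal_ne_top
  -- measurability of F j₁
  have hmeasF : ∀ j₁ : ℕ, AEStronglyMeasurable
      (fun t => Real.exp ((α - lam j₁) * t) * ⟪f₂, (e j₁ : H)⟫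
        * ⟪Q (Sop (fun j => (e j : H)) lam α t f₁), (e j₁ : H)⟫)
      (volume.restrict (Set.Ioi (0:ℝ))) := by
    intro j₁
    have hWmeas : Measurable (fun t : ℝ => ∑' j₂, Set.indicator (Set.Ioi (0:ℝ))
        (fun s => (⟪f₂, (e j₁ : H)⟫ * ⟪f₁, (e j₂ : H)⟫ * ⟪Q (e j₁ : H), (e j₂ : H)⟫)
          * Real.exp (-((lam j₁ + lam j₂ - 2 * α) * s))) t) := by
      apply measurable_of_tendsto_metrizable'
        (f := fun (n : ℕ) (t : ℝ) => ∑ j₂ ∈ Finset.range n, Set.indicator (Set.Ioi (0:ℝ))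
          (fun s => (⟪f₂, (e j₁ : H)⟫ * ⟪f₁, (e j₂ : H)⟫ * ⟪Q (e j₁ : H), (e j₂ : H)⟫)
            * Real.exp (-((lam j₁ + lam j₂ - 2 * α) * s))) t)
        Filter.atTop
      · intro n
        apply Finset.measurable_sum
        intro j₂ _
        exact (Continuous.measurable (by fun_prop)).indicator measurableSet_Ioi
      · rw [tendsto_pi_nhds]
        intro t
        apply HasSum.tendsto_sum_nat
        apply Summable.hasSum
        by_cases ht : t ∈ Set.Ioi (0:ℝ)
        · refine ((hP1 j₁ t (le_of_lt (Set.mem_Ioi.mp ht))).summable).congr (fun j₂ => ?_)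
          rw [Set.indicator_of_mem ht]
        · exact summable_zero.congr (fun j₂ => (Set.indicator_of_notMem ht _).symm)
    have hae : (fun t : ℝ => ∑' j₂, Set.indicator (Set.Ioi (0:ℝ))
        (fun s => (⟪f₂, (e j₁ : H)⟫ * ⟪f₁, (e j₂ : H)⟫ * ⟪Q (e j₁ : H), (e j₂ : H)⟫)
          * Real.exp (-((lam j₁ + lam j₂ - 2 * α) * s))) t)
        =ᵐ[volume.restrict (Set.Ioi (0:ℝ))]
        (fun t => Real.exp ((α - lam j₁) * t) * ⟪f₂, (e j₁ : H)⟫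
          * ⟪Q (Sop (fun j => (e j : H)) lam α t f₁), (e j₁ : H)⟫) := by
      filter_upwards [self_mem_ae_restrict measurableSet_Ioi] with t ht
      rw [tsum_congr (fun j₂ => Set.indicator_of_mem ht _)]
      exact (hP1 j₁ t (le_of_lt (Set.mem_Ioi.mp ht))).tsum_eq
    exact hWmeas.aestronglyMeasurable.congr hae
  -- finiteness of the double lintegral
  have hfin : (∑' j₁, ∫⁻ t in Set.Ioi (0:ℝ),
      ‖Real.exp ((α - lam j₁) * t) * ⟪f₂, (e j₁ : H)⟫
        * ⟪Q (Sop (fun j => (e j : H)) lam α t f₁), (e j₁ : H)⟫‖ₑ) ≠ ⊤ := by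
    rw [← MeasureTheory.lintegral_tsum (fun j₁ => (hmeasF j₁).enorm)]
    have hbound : ∀ t : ℝ, t ∈ Set.Ioi (0:ℝ) →
        (∑' j₁, (‖Real.exp ((α - lam j₁) * t) * ⟪f₂, (e j₁ : H)⟫
          * ⟪Q (Sop (fun j => (e j : H)) lam α t f₁), (e j₁ : H)⟫‖₊ : ENNReal))
        ≤ ENNReal.ofReal (Real.exp (-((lam 0 - α) * t))
          * ((‖f₂‖ ^ 2 + (‖Q‖ * ‖f₁‖) ^ 2) / 2)) := by
      intro t ht
      have ht' : (0:ℝ) ≤ t := (Set.mem_Ioi.mp ht).le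
      set y := Q (Sop (fun j => (e j : H)) lam α t f₁) with hy
      have hFn : ∀ j₁ : ℕ, ‖Real.exp ((α - lam j₁) * t) * ⟪f₂, (e j₁ : H)⟫ * ⟪y, (e j₁ : H)⟫‖
          ≤ Real.exp (-((lam 0 - α) * t)) * (|⟪f₂, (e j₁ : H)⟫| * |⟪y, (e j₁ : H)⟫|) := by
        intro j₁
        rw [Real.norm_eq_abs, abs_mul, abs_mul, Real.abs_exp, mul_assoc]
        exact mul_le_mul_of_nonneg_right (hexpβ t ht' j₁)
          (mul_nonneg (abs_nonneg _) (abs_nonneg _))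
      have hsumF : Summable (fun j₁ => ‖Real.exp ((α - lam j₁) * t) * ⟪f₂, (e j₁ : H)⟫
          * ⟪y, (e j₁ : H)⟫‖) :=
        Summable.of_nonneg_of_le (fun _ => norm_nonneg _) hFn
          ((aux_abs_inner_summable e f₂ y).mul_left _)
      have hyle : ‖y‖ ≤ ‖Q‖ * ‖f₁‖ := by
        rw [hy]
        refine le_trans (Q.le_opNorm _) ?_
        exact mul_le_mul_of_nonneg_left (hSopnorm t ht') (norm_nonneg _)
      have htsumF : (∑' j₁, ‖Real.exp ((α - lam j₁) * t) * ⟪f₂, (e j₁ : H)⟫ * ⟪y, (e j₁ : H)⟫‖)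
          ≤ Real.exp (-((lam 0 - α) * t)) * ((‖f₂‖ ^ 2 + (‖Q‖ * ‖f₁‖) ^ 2) / 2) := by
        calc (∑' j₁, ‖Real.exp ((α - lam j₁) * t) * ⟪f₂, (e j₁ : H)⟫ * ⟪y, (e j₁ : H)⟫‖)
            ≤ ∑' j₁, Real.exp (-((lam 0 - α) * t)) * (|⟪f₂, (e j₁ : H)⟫| * |⟪y, (e j₁ : H)⟫|) :=
              Summable.tsum_le_tsum hFn hsumF ((aux_abs_inner_summable e f₂ y).mul_left _)
          _ = Real.exp (-((lam 0 - α) * t)) * ∑' j₁, |⟪f₂, (e j₁ : H)⟫| * |⟪y, (e j₁ : H)⟫| :=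
              tsum_mul_left
          _ ≤ Real.exp (-((lam 0 - α) * t)) * ((‖f₂‖ ^ 2 + (‖Q‖ * ‖f₁‖) ^ 2) / 2) := by
              refine mul_le_mul_of_nonneg_left ?_ (Real.exp_pos _).le
              refine le_trans (aux_abs_inner_tsum_le e f₂ y) ?_
              have h1 : ‖y‖ ^ 2 ≤ (‖Q‖ * ‖f₁‖) ^ 2 := by
                have := norm_nonneg y; nlinarith
              linarith
      calc (∑' j₁, (‖Real.exp ((α - lam j₁) * t) * ⟪f₂, (e j₁ : H)⟫
            * ⟪y, (e j₁ : H)⟫‖₊ : ENNReal))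
          = ENNReal.ofReal (∑' j₁, ‖Real.exp ((α - lam j₁) * t) * ⟪f₂, (e j₁ : H)⟫
            * ⟪y, (e j₁ : H)⟫‖) := by
            rw [ENNReal.ofReal_tsum_of_nonneg (fun _ => norm_nonneg _) hsumF]
            exact tsum_congr fun j₁ => (ofReal_norm _).symm
        _ ≤ ENNReal.ofReal (Real.exp (-((lam 0 - α) * t))
            * ((‖f₂‖ ^ 2 + (‖Q‖ * ‖f₁‖) ^ 2) / 2)) := ENNReal.ofReal_le_ofReal htsumF
    have h1 : (∫⁻ t in Set.Ioi (0:ℝ), ∑' j₁,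
        (‖Real.exp ((α - lam j₁) * t) * ⟪f₂, (e j₁ : H)⟫
          * ⟪Q (Sop (fun j => (e j : H)) lam α t f₁), (e j₁ : H)⟫‖₊ : ENNReal))
        ≤ ∫⁻ t in Set.Ioi (0:ℝ), ENNReal.ofReal (Real.exp (-((lam 0 - α) * t))
          * ((‖f₂‖ ^ 2 + (‖Q‖ * ‖f₁‖) ^ 2) / 2)) := by
      refine MeasureTheory.lintegral_mono_ae ?_
      filter_upwards [self_mem_ae_restrict measurableSet_Ioi] with t ht
      exact hbound t ht
    have hint : IntegrableOn (fun t : ℝ => Real.exp (-((lam 0 - α) * t))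
        * ((‖f₂‖ ^ 2 + (‖Q‖ * ‖f₁‖) ^ 2) / 2)) (Set.Ioi 0) := by
      have h := (exp_neg_integrableOn_Ioi 0 hβ).mul_const ((‖f₂‖ ^ 2 + (‖Q‖ * ‖f₁‖) ^ 2) / 2)
      simpa only [neg_mul, IntegrableOn] using h
    have h2 : (∫⁻ t in Set.Ioi (0:ℝ), ENNReal.ofReal (Real.exp (-((lam 0 - α) * t))
        * ((‖f₂‖ ^ 2 + (‖Q‖ * ‖f₁‖) ^ 2) / 2))) ≠ ⊤ := by
      rw [← MeasureTheory.ofReal_integral_eq_lintegral_ofReal hint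
        (Filter.Eventually.of_forall (fun t => by positivity))]
      exact ENNReal.ofReal_ne_top
    exact ne_top_of_le_ne_top h2 h1
  -- summability of the integrals
  have hIntSummable : Summable (fun j₁ => ∫ t in Set.Ioi (0:ℝ),
      Real.exp ((α - lam j₁) * t) * ⟪f₂, (e j₁ : H)⟫
        * ⟪Q (Sop (fun j => (e j : H)) lam α t f₁), (e j₁ : H)⟫) := by
    refine Summable.of_norm_bounded
      (g := fun j₁ => (∫⁻ t in Set.Ioi (0:ℝ), ‖Real.exp ((α - lam j₁) * t) * ⟪f₂, (e j₁ : H)⟫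
        * ⟪Q (Sop (fun j => (e j : H)) lam α t f₁), (e j₁ : H)⟫‖ₑ).toReal)
      (ENNReal.summable_toReal hfin) (fun j₁ => ?_)
    have h := MeasureTheory.norm_integral_le_lintegral_norm
      (μ := volume.restrict (Set.Ioi (0:ℝ)))
      (fun t => Real.exp ((α - lam j₁) * t) * ⟪f₂, (e j₁ : H)⟫
        * ⟪Q (Sop (fun j => (e j : H)) lam α t f₁), (e j₁ : H)⟫)
    simpa only [ofReal_norm] using h
  -- rewriting the target terms
  have hterm_eq : ∀ j₁ j₂ : ℕ,
      σ ^ 2 * ⟪f₁, (e j₂ : H)⟫ * ⟪f₂, (e j₁ : H)⟫ / (lam j₁ + lam j₂ - 2 * α)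
        * ∑' n, q n * ⟪(e j₁ : H), b n⟫ * ⟪(e j₂ : H), b n⟫
      = σ ^ 2 * ((⟪f₂, (e j₁ : H)⟫ * ⟪f₁, (e j₂ : H)⟫ * ⟪Q (e j₁ : H), (e j₂ : H)⟫)
        * (1 / (lam j₁ + lam j₂ - 2 * α))) := by
    intro j₁ j₂
    rw [hn_val j₁ j₂]; ring
  have houter : ∀ j₁ : ℕ,
      (∑' j₂, σ ^ 2 * ⟪f₁, (e j₂ : H)⟫ * ⟪f₂, (e j₁ : H)⟫ / (lam j₁ + lam j₂ - 2 * α)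
        * ∑' n, q n * ⟪(e j₁ : H), b n⟫ * ⟪(e j₂ : H), b n⟫)
      = σ ^ 2 * ∫ t in Set.Ioi (0:ℝ), Real.exp ((α - lam j₁) * t) * ⟪f₂, (e j₁ : H)⟫
        * ⟪Q (Sop (fun j => (e j : H)) lam α t f₁), (e j₁ : H)⟫ := by
    intro j₁
    calc (∑' j₂, σ ^ 2 * ⟪f₁, (e j₂ : H)⟫ * ⟪f₂, (e j₁ : H)⟫ / (lam j₁ + lam j₂ - 2 * α)
          * ∑' n, q n * ⟪(e j₁ : H), b n⟫ * ⟪(e j₂ : H), b n⟫)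
        = ∑' j₂, σ ^ 2 * ((⟪f₂, (e j₁ : H)⟫ * ⟪f₁, (e j₂ : H)⟫ * ⟪Q (e j₁ : H), (e j₂ : H)⟫)
          * (1 / (lam j₁ + lam j₂ - 2 * α))) := tsum_congr (hterm_eq j₁)
      _ = σ ^ 2 * ∑' j₂, (⟪f₂, (e j₁ : H)⟫ * ⟪f₁, (e j₂ : H)⟫ * ⟪Q (e j₁ : H), (e j₂ : H)⟫)
          * (1 / (lam j₁ + lam j₂ - 2 * α)) := tsum_mul_left
      _ = σ ^ 2 * ∫ t in Set.Ioi (0:ℝ), Real.exp ((α - lam j₁) * t) * ⟪f₂, (e j₁ : H)⟫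
          * ⟪Q (Sop (fun j => (e j : H)) lam α t f₁), (e j₁ : H)⟫ := by rw [hI j₁]
  refine ⟨hn_sum, hin_sum, ?_, ?_⟩
  · exact (summable_congr houter).mpr (hIntSummable.mul_left (σ ^ 2))
  · have hG : (∫ t in Set.Ioi (0:ℝ),
        ⟪Q (Sop (fun j => (e j : H)) lam α t f₁), Sop (fun j => (e j : H)) lam α t f₂⟫)
        = ∑' j₁, ∫ t in Set.Ioi (0:ℝ), Real.exp ((α - lam j₁) * t) * ⟪f₂, (e j₁ : H)⟫
          * ⟪Q (Sop (fun j => (e j : H)) lam α t f₁), (e j₁ : H)⟫ := by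
      rw [setIntegral_congr_fun measurableSet_Ioi
        (fun t ht => ((hP2 t (le_of_lt (Set.mem_Ioi.mp ht))).tsum_eq).symm :
          Set.EqOn _ _ (Set.Ioi (0:ℝ)))]
      exact integral_tsum hmeasF hfin
    calc σ ^ 2 * (∫ t in Set.Ioi (0:ℝ),
          ⟪Q (Sop (fun j => (e j : H)) lam α t f₁), Sop (fun j => (e j : H)) lam α t f₂⟫)
        = σ ^ 2 * ∑' j₁, ∫ t in Set.Ioi (0:ℝ), Real.exp ((α - lam j₁) * t) * ⟪f₂, (e j₁ : H)⟫
          * ⟪Q (Sop (fun j => (e j : H)) lam α t f₁), (e j₁ : H)⟫ := by rw [hG]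
      _ = ∑' j₁, σ ^ 2 * ∫ t in Set.Ioi (0:ℝ), Real.exp ((α - lam j₁) * t) * ⟪f₂, (e j₁ : H)⟫
          * ⟪Q (Sop (fun j => (e j : H)) lam α t f₁), (e j₁ : H)⟫ := tsum_mul_left.symm
      _ = ∑' j₁, ∑' j₂, σ ^ 2 * ⟪f₁, (e j₂ : H)⟫ * ⟪f₂, (e j₁ : H)⟫ / (lam j₁ + lam j₂ - 2 * α)
          * ∑' n, q n * ⟪(e j₁ : H), b n⟫ * ⟪(e j₂ : H), b n⟫ :=
          tsum_congr fun j₁ => (houter j₁).symm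
end

section
/- Under the hypotheses of the pointwise early-warning-sign corollary (continuous representatives with sup_j ‖e_j‖_∞ ≤ M; ‖e_j − e_j'‖_∞ ≤ c/j; λ_j ≥ c₁·j²; λ_j ≥ λ_1 > α; 0 ≤ q_n ≤ q*; and b_n = e_n' for n > D), the double series Σ_{j₁=1}^∞ Σ_{j₂=1}^∞ |⟨Q e_{j₁}, e_{j₂}⟩| / (λ_{j₁} + λ_{j₂} − 2α) is finite. (This is the domination bound established in the proof of the paper's Corollary 3.3, which justifies the dominated-convergence argument there.) -/
open scoped RealInnerProductSpace
open MeasureTheory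

/-- The Hilbert space `H := L²(0,L)`. -/
abbrev HL (L : ℝ) : Type := Lp ℝ 2 (volume.restrict (Set.Icc (0:ℝ) L))

/-- The Dirichlet eigenfunctions of the Laplacian, `e'_{k+1}(x) = √(2/L)·sin(π(k+1)x/L)`. -/
noncomputable def sineEF (L : ℝ) (k : ℕ) (x : ℝ) : ℝ :=
  Real.sqrt (2 / L) * Real.sin (Real.pi * (k + 1) * x / L)

section Aux

lemma aux_geo (x y : ℝ) (hx : 1 ≤ x) (hy : 1 ≤ y) :
    x ^ ((5:ℝ)/8) * y ^ ((3:ℝ)/8) ≤ x + y := by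
  have hx0 : (0:ℝ) ≤ x := by linarith
  have hy0 : (0:ℝ) ≤ y := by linarith
  have hm0 : (0:ℝ) < max x y := lt_of_lt_of_le one_pos (le_max_of_le_left hx)
  calc x ^ ((5:ℝ)/8) * y ^ ((3:ℝ)/8)
      ≤ (max x y) ^ ((5:ℝ)/8) * (max x y) ^ ((3:ℝ)/8) := by
        apply mul_le_mul (Real.rpow_le_rpow hx0 (le_max_left _ _) (by norm_num))
          (Real.rpow_le_rpow hy0 (le_max_right _ _) (by norm_num))
          (Real.rpow_nonneg hy0 _) (Real.rpow_nonneg hm0.le _)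
    _ = max x y := by
        rw [← Real.rpow_add hm0]; norm_num
    _ ≤ x + y := max_le (by linarith) (by linarith)

lemma aux_amgm (x y t : ℝ) (hx : 0 ≤ x) (hy : 0 ≤ y) (ht : 0 < t) :
    x * y ≤ (x ^ 2 * t + y ^ 2 / t) / 2 := by
  rw [le_div_iff₀ (by norm_num : (0:ℝ) < 2)]
  have h2 : x * y * 2 ≤ (x ^ 2 * t * t + y ^ 2) / t := by
    rw [le_div_iff₀ ht]; nlinarith [sq_nonneg (x * t - y)]
  refine h2.trans_eq ?_
  field_simp

lemma aux_shift_summable (p : ℝ) (hp : p < -1) :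
    Summable (fun j : ℕ => (((j:ℝ) + 1) ^ p)) := by
  have := (summable_nat_add_iff (f := fun n : ℕ => (n:ℝ) ^ p) 1).mpr
    (Real.summable_nat_rpow.mpr hp)
  convert this using 2 with j
  · rfl
  · push_cast; ring_nf

/-- `auxP j = (j+1)^(5/4)`. -/
noncomputable def auxP (j : ℕ) : ℝ := ((j:ℝ) + 1) ^ ((5:ℝ)/4)

/-- `auxR j = (j+1)^(3/4)`. -/
noncomputable def auxR (j : ℕ) : ℝ := ((j:ℝ) + 1) ^ ((3:ℝ)/4)

lemma aux_u_pos (j : ℕ) : (0:ℝ) < (j:ℝ) + 1 := by positivity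

lemma aux_u_one_le (j : ℕ) : (1:ℝ) ≤ (j:ℝ) + 1 := by
  have : (0:ℝ) ≤ (j:ℝ) := Nat.cast_nonneg j
  linarith

lemma auxP_one_le (j : ℕ) : 1 ≤ auxP j := Real.one_le_rpow (aux_u_one_le j) (by norm_num)

lemma auxR_one_le (j : ℕ) : 1 ≤ auxR j := Real.one_le_rpow (aux_u_one_le j) (by norm_num)

lemma auxP_pos (j : ℕ) : 0 < auxP j := lt_of_lt_of_le one_pos (auxP_one_le j)

lemma auxR_pos (j : ℕ) : 0 < auxR j := lt_of_lt_of_le one_pos (auxR_one_le j)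

lemma auxP_inv_summable : Summable (fun j : ℕ => (auxP j)⁻¹) := by
  have h := aux_shift_summable (-((5:ℝ)/4)) (by norm_num)
  refine h.congr fun j => ?_
  rw [Real.rpow_neg (aux_u_pos j).le, auxP]

lemma auxR_sq_inv_summable : Summable (fun j : ℕ => ((auxR j) ^ 2)⁻¹) := by
  have h := aux_shift_summable (-((3:ℝ)/2)) (by norm_num)
  refine h.congr fun j => ?_
  have h1 : (auxR j) ^ 2 = ((j:ℝ) + 1) ^ ((3:ℝ)/2) := by
    rw [auxR, ← Real.rpow_natCast (((j:ℝ)+1) ^ ((3:ℝ)/4)) 2,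
      ← Real.rpow_mul (aux_u_pos j).le]
    norm_num
  rw [Real.rpow_neg (aux_u_pos j).le, h1]

lemma aux_geo' (j₁ j₂ : ℕ) :
    auxP j₁ * auxR j₂ ≤ ((j₁:ℝ) + 1) ^ 2 + ((j₂:ℝ) + 1) ^ 2 := by
  have h1 : (((j₁:ℝ) + 1) ^ 2) ^ ((5:ℝ)/8) = auxP j₁ := by
    rw [← Real.rpow_natCast ((j₁:ℝ)+1) 2, ← Real.rpow_mul (aux_u_pos j₁).le, auxP]
    norm_num
  have h2 : (((j₂:ℝ) + 1) ^ 2) ^ ((3:ℝ)/8) = auxR j₂ := by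
    rw [← Real.rpow_natCast ((j₂:ℝ)+1) 2, ← Real.rpow_mul (aux_u_pos j₂).le, auxR]
    norm_num
  have := aux_geo (((j₁:ℝ) + 1) ^ 2) (((j₂:ℝ) + 1) ^ 2)
    (by nlinarith [aux_u_one_le j₁]) (by nlinarith [aux_u_one_le j₂])
  rwa [h1, h2] at this

end Aux

set_option maxHeartbeats 1000000 in
/-- The domination bound established in the proof of Corollary 3.3 of the paper:
the double series `Σ_{j₁}Σ_{j₂} |⟨Q e_{j₁}, e_{j₂}⟩| / (λ_{j₁}+λ_{j₂}−2α)` is finite. -/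
theorem stmt_6 (L : ℝ) (hL : 0 < L)
    (e b : HilbertBasis ℕ ℝ (HL L))
    (ec : ℕ → ℝ → ℝ) (hec_cont : ∀ j, Continuous (ec j))
    (hec_ae : ∀ j, ⇑(e j) =ᵐ[volume.restrict (Set.Icc (0:ℝ) L)] ec j)
    (M : ℝ) (hM : 0 < M) (hec_bd : ∀ j, ∀ x ∈ Set.Icc (0:ℝ) L, |ec j x| ≤ M)
    (c c₁ : ℝ) (hc : 0 < c) (hc₁ : 0 < c₁)
    (lam : ℕ → ℝ)
    (hclose : ∀ j, ∀ x ∈ Set.Icc (0:ℝ) L, |ec j x - sineEF L j x| ≤ c / (j + 1))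
    (hgrow : ∀ j : ℕ, c₁ * ((j : ℝ) + 1) ^ 2 ≤ lam j)
    (hlam : ∀ j, lam 0 ≤ lam j)
    (α : ℝ) (hα : α < lam 0)
    (Q : (HL L) →L[ℝ] (HL L)) (hQ_sa : ∀ f h : HL L, ⟪Q f, h⟫ = ⟪f, Q h⟫)
    (q : ℕ → ℝ) (qstar : ℝ)
    (hq_nonneg : ∀ n, 0 ≤ q n) (hq_bd : ∀ n, q n ≤ qstar)
    (hQ_eig : ∀ n, Q (b n) = q n • b n)
    (D : ℕ) (hD : 1 ≤ D)
    (hb_sine : ∀ n, D < n + 1 →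
      ⇑(b n) =ᵐ[volume.restrict (Set.Icc (0:ℝ) L)] sineEF L n) :
    Summable (fun p : ℕ × ℕ =>
      |⟪Q (e p.1 : HL L), (e p.2 : HL L)⟫| / (lam p.1 + lam p.2 - 2 * α)) := by
  classical
  have hlam0pos : 0 < lam 0 := lt_of_lt_of_le (by positivity) (hgrow 0)
  have hδ : 0 < lam 0 - α := sub_pos.2 hα
  set ε : ℝ := min c₁ (c₁ * (lam 0 - α) / lam 0) with hεdef
  have hε : 0 < ε := lt_min hc₁ (by positivity)
  -- key growth bound on eigenvalues minus α
  have hkey : ∀ j : ℕ, ε * ((j:ℝ) + 1) ^ 2 ≤ lam j - α := by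
    intro j
    rcases le_or_gt α 0 with h0 | h0
    · have h1 : ε ≤ c₁ := min_le_left _ _
      nlinarith [hgrow j, sq_nonneg ((j:ℝ) + 1)]
    · have h1 : ε ≤ c₁ * (lam 0 - α) / lam 0 := min_le_right _ _
      have h2 : (lam 0 - α) / lam 0 * lam j ≤ lam j - α := by
        rw [div_mul_eq_mul_div, div_le_iff₀ hlam0pos]
        nlinarith [hlam j]
      have h3 : ε * ((j:ℝ) + 1) ^ 2 ≤ (lam 0 - α) / lam 0 * (c₁ * ((j:ℝ) + 1) ^ 2) := by
        calc ε * ((j:ℝ) + 1) ^ 2 ≤ (c₁ * (lam 0 - α) / lam 0) * ((j:ℝ) + 1) ^ 2 :=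
              mul_le_mul_of_nonneg_right h1 (by positivity)
          _ = (lam 0 - α) / lam 0 * (c₁ * ((j:ℝ) + 1) ^ 2) := by ring
      have h4 : (lam 0 - α) / lam 0 * (c₁ * ((j:ℝ) + 1) ^ 2) ≤ (lam 0 - α) / lam 0 * lam j :=
        mul_le_mul_of_nonneg_left (hgrow j) (by positivity)
      linarith
  -- lower bound on the denominator
  have hdenl : ∀ j₁ j₂ : ℕ, ε * (auxP j₁ * auxR j₂) ≤ lam j₁ + lam j₂ - 2 * α := by
    intro j₁ j₂
    have h1 := mul_le_mul_of_nonneg_left (aux_geo' j₁ j₂) hε.le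
    have := hkey j₁
    have := hkey j₂
    nlinarith
  have hdenpos : ∀ j₁ j₂ : ℕ, 0 < lam j₁ + lam j₂ - 2 * α := by
    intro j₁ j₂
    refine lt_of_lt_of_le ?_ (hdenl j₁ j₂)
    have := auxP_pos j₁; have := auxR_pos j₂; positivity
  -- the two dominating summable families
  set g1 : ℕ × ℕ → ℝ := fun p => ⟪Q (e p.1 : HL L), (e p.2 : HL L)⟫ ^ 2 * (auxP p.1)⁻¹
    with hg1def
  set g2 : ℕ × ℕ → ℝ := fun p => (ε⁻¹ ^ 2 * (auxP p.1)⁻¹) * ((auxR p.2) ^ 2)⁻¹ with hg2def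
  -- Parseval rows for g1
  have hrow : ∀ j₁ : ℕ, HasSum (fun j₂ => g1 (j₁, j₂)) (‖Q (e j₁)‖ ^ 2 * (auxP j₁)⁻¹) := by
    intro j₁
    have h := (e.hasSum_inner_mul_inner (Q (e j₁)) (Q (e j₁))).mul_right (auxP j₁)⁻¹
    have heq : (fun j₂ => ⟪Q (e j₁), e j₂⟫ * ⟪e j₂, Q (e j₁)⟫ * (auxP j₁)⁻¹)
        = fun j₂ => g1 (j₁, j₂) := by
      funext j₂
      simp only [hg1def]
      rw [real_inner_comm (e j₂) (Q (e j₁))]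
      ring
    rw [heq] at h
    have hx : ⟪Q (e j₁), Q (e j₁)⟫ = ‖Q (e j₁)‖ ^ 2 := real_inner_self_eq_norm_sq _
    rwa [hx] at h
  have hg1 : Summable g1 := by
    refine (summable_prod_of_nonneg ?_).mpr ⟨fun j₁ => (hrow j₁).summable, ?_⟩
    · intro p
      exact mul_nonneg (sq_nonneg _) (inv_nonneg.2 (auxP_pos p.1).le)
    · have hbd : ∀ j₁ : ℕ, ∑' j₂, g1 (j₁, j₂) ≤ ‖Q‖ ^ 2 * (auxP j₁)⁻¹ := by
        intro j₁
        rw [(hrow j₁).tsum_eq]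
        have hne : ‖Q (e j₁)‖ ≤ ‖Q‖ := by
          have h := Q.le_opNorm (e j₁)
          rwa [e.orthonormal.1 j₁, mul_one] at h
        have : ‖Q (e j₁)‖ ^ 2 ≤ ‖Q‖ ^ 2 := by nlinarith [norm_nonneg (Q (e j₁))]
        exact mul_le_mul_of_nonneg_right this (inv_nonneg.2 (auxP_pos j₁).le)
      refine Summable.of_nonneg_of_le (fun j₁ => ?_) hbd (auxP_inv_summable.mul_left (‖Q‖ ^ 2))
      exact tsum_nonneg fun j₂ => mul_nonneg (sq_nonneg _) (inv_nonneg.2 (auxP_pos j₁).le)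
  have hg2 : Summable g2 :=
    Summable.mul_of_nonneg (auxP_inv_summable.mul_left (ε⁻¹ ^ 2)) auxR_sq_inv_summable
      (fun j => mul_nonneg (by positivity) (inv_nonneg.2 (auxP_pos j).le))
      (fun j => inv_nonneg.2 (sq_nonneg _))
  -- domination
  have hdom : ∀ p : ℕ × ℕ,
      |⟪Q (e p.1 : HL L), (e p.2 : HL L)⟫| / (lam p.1 + lam p.2 - 2 * α)
        ≤ (g1 p + g2 p) / 2 := by
    rintro ⟨j₁, j₂⟩
    set a : ℝ := ⟪Q (e j₁ : HL L), (e j₂ : HL L)⟫ with hadef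
    set den : ℝ := lam j₁ + lam j₂ - 2 * α with hdendef
    have hd0 : 0 < den := hdenpos j₁ j₂
    have hP := auxP_pos j₁
    have hR := auxR_pos j₂
    have step1 : |a| * den⁻¹ ≤ (|a| ^ 2 * (auxP j₁)⁻¹ + (den⁻¹) ^ 2 / (auxP j₁)⁻¹) / 2 :=
      aux_amgm _ _ _ (abs_nonneg a) (inv_nonneg.2 hd0.le) (inv_pos.2 hP)
    have step2 : (den⁻¹) ^ 2 / (auxP j₁)⁻¹ ≤ g2 (j₁, j₂) := by
      have h5 : ε * (auxP j₁ * auxR j₂) ≤ den := hdenl j₁ j₂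
      have h6 : (ε * (auxP j₁ * auxR j₂)) ^ 2 ≤ den ^ 2 := by
        apply pow_le_pow_left₀ (by positivity) h5
      have h7 : (den⁻¹) ^ 2 / (auxP j₁)⁻¹ = auxP j₁ / den ^ 2 := by
        field_simp
      have h8 : auxP j₁ / den ^ 2 ≤ auxP j₁ / (ε * (auxP j₁ * auxR j₂)) ^ 2 := by
        apply div_le_div_of_nonneg_left hP.le (by positivity) h6
      have h9 : auxP j₁ / (ε * (auxP j₁ * auxR j₂)) ^ 2 = g2 (j₁, j₂) := by
        simp only [hg2def]
        field_simp
      rw [h7]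
      exact h8.trans_eq h9
    have hg1eq : g1 (j₁, j₂) = a ^ 2 * (auxP j₁)⁻¹ := rfl
    have hsq : |a| ^ 2 = a ^ 2 := sq_abs a
    calc |a| / den = |a| * den⁻¹ := div_eq_mul_inv _ _
      _ ≤ (|a| ^ 2 * (auxP j₁)⁻¹ + (den⁻¹) ^ 2 / (auxP j₁)⁻¹) / 2 := step1
      _ ≤ (g1 (j₁, j₂) + g2 (j₁, j₂)) / 2 := by
          rw [hg1eq, ← hsq]
          have := step2
          have hinv : 0 ≤ (auxP j₁)⁻¹ := (inv_nonneg.2 hP.le)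
          linarith
  refine Summable.of_nonneg_of_le (fun p => ?_) hdom ((hg1.add hg2).div_const 2)
  exact div_nonneg (abs_nonneg _) (hdenpos p.1 p.2).le
end
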